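/- arXiv:1207.5761 — 7 statements merged into one kernel-verified Lean document; each statement's English description precedes it below -/
import Mathlib

section
/- For a Schwartz function Φ on ℝ², the identity ∬_{ℝ²} Φ(x,y) dx dy = ∫_ℝ O_ξ(Φ) dξ holds, where O_ξ(Φ) = ∫_{ℝ^×} Φ(t, ξ/t) |t|^{-1} dt is the orbital integral over the hyperbola xy = ξ. -/
/-!
Substitute `y = ξ / t` in the inner integral: for `t ≠ 0` the Jacobian `|t|⁻¹` compensates the
dilation. Then swap the order of integration by Fubini. The integrability this needs comes from
the same substitution applied to `‖f‖`, and the measurability from the fact that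
`(t, ξ) ↦ (t, ξ / t)` pulls null sets back to null sets.
-/

open MeasureTheory

variable {E : Type*} [NormedAddCommGroup E] [NormedSpace ℝ E]

theorem Real.integral_abs_inv_smul_comp_div (g : ℝ → E) {t : ℝ} (ht : t ≠ 0) :
    ∫ ξ, |t|⁻¹ • g (ξ / t) = ∫ y, g y := by
  rw [integral_smul, Measure.integral_comp_div, smul_smul,
    inv_mul_cancel₀ (abs_ne_zero.mpr ht), one_smul]

theorem Real.quasiMeasurePreserving_div_fst :
    Measure.QuasiMeasurePreserving (fun p : ℝ × ℝ => (p.1, p.2 / p.1))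
      (volume.prod volume) (volume.prod volume) := by
  have hmeas : Measurable fun p : ℝ × ℝ => (p.1, p.2 / p.1) := by fun_prop
  refine ⟨hmeas, Measure.AbsolutelyContinuous.mk fun s hs hs0 => ?_⟩
  rw [Measure.map_apply hmeas hs, Measure.prod_apply (hmeas hs)]
  rw [Measure.prod_apply hs, lintegral_eq_zero_iff (measurable_measure_prodMk_left hs)] at hs0
  refine lintegral_eq_zero_of_ae_eq_zero ?_
  filter_upwards [hs0, Measure.ae_ne volume 0] with t hst ht
  have hfibre : Prod.mk t ⁻¹' ((fun p : ℝ × ℝ => (p.1, p.2 / p.1)) ⁻¹' s)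
      = (· * t⁻¹) ⁻¹' (Prod.mk t ⁻¹' s) := by
    ext; simp [div_eq_mul_inv]
  simp only [Pi.zero_apply] at hst ⊢
  rw [hfibre, Real.volume_preimage_mul_right (inv_ne_zero ht), hst, mul_zero]

theorem MeasureTheory.Integrable.abs_inv_smul_comp_div_fst {f : ℝ × ℝ → E}
    (hf : Integrable f (volume.prod volume)) :
    Integrable (fun p : ℝ × ℝ => |p.1|⁻¹ • f (p.1, p.2 / p.1)) (volume.prod volume) := by
  have hne : ∀ᵐ t : ℝ, t ≠ 0 := Measure.ae_ne volume 0
  refine (integrable_prod_iff ?_).mpr ⟨?_, ?_⟩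
  · exact (by fun_prop : Measurable fun p : ℝ × ℝ => |p.1|⁻¹).aestronglyMeasurable.smul
      (hf.aestronglyMeasurable.comp_quasiMeasurePreserving Real.quasiMeasurePreserving_div_fst)
  · filter_upwards [hf.prod_right_ae, hne] with t hft ht
    exact (hft.comp_div ht).smul _
  · refine hf.integral_norm_prod_left.congr ?_
    filter_upwards [hne] with t ht
    simp_rw [norm_smul, norm_inv, Real.norm_eq_abs, abs_abs, ← smul_eq_mul]
    exact (Real.integral_abs_inv_smul_comp_div (fun y => ‖f (t, y)‖) ht).symm

theorem MeasureTheory.integral_integral_eq_integral_integral_abs_inv_smul_comp_div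
    {f : ℝ × ℝ → E} (hf : Integrable f (volume.prod volume)) :
    ∫ x, ∫ y, f (x, y) = ∫ ξ, ∫ t, |t|⁻¹ • f (t, ξ / t) := by
  calc ∫ x, ∫ y, f (x, y) = ∫ t, ∫ ξ, |t|⁻¹ • f (t, ξ / t) := by
        refine integral_congr_ae ?_
        filter_upwards [Measure.ae_ne volume 0] with t ht
        exact (Real.integral_abs_inv_smul_comp_div (fun y => f (t, y)) ht).symm
    _ = ∫ ξ, ∫ t, |t|⁻¹ • f (t, ξ / t) :=
        integral_integral_swap hf.abs_inv_smul_comp_div_fst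

/-- Integration formula: the integral of a Schwartz function on `ℝ²` equals the
integral over `ξ` of its orbital integrals over the hyperbolas `xy = ξ`. -/
theorem stmt_4 (Φ : SchwartzMap (ℝ × ℝ) ℂ) :
    (∫ x : ℝ, ∫ y : ℝ, Φ (x, y))
      = ∫ ξ : ℝ, ∫ t : ℝ, (|t|⁻¹ : ℝ) • Φ (t, ξ / t) :=
  integral_integral_eq_integral_integral_abs_inv_smul_comp_div Φ.integrable
end

section
/- For Schwartz functions Φ₁, Φ₂ on ℝ and ξ ≠ 0, the orbital integral of Φ = Φ₁ ⊗ Φ₂ factors through Mellin transforms: ∫_{ℝ^×} |ξ|^{1/2} O_ξ(Φ) χ(ξ)⁻¹ d^×ξ = ζ(Φ₁, χ⁻¹, 1/2) · ζ(Φ₂, χ⁻¹, 1/2), where O_ξ(Φ) = ∫ Φ₁(t)Φ₂(ξ/t) |t|⁻¹ dt, ζ(φ, χ, s) = ∫_{ℝ^×} φ(x) χ(x) |x|^s d^×x, and χ = sgn^ε |·|^{iτ} is a unitary character, with all integrals absolutely convergent. -/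
/-!
The weight `W(x) = χ(x)⁻¹ |x|^{1/2} |x|⁻¹` is multiplicative on `ℝ^×` and has modulus
`|x|^{-1/2}`, which is integrable near `0`; since Schwartz functions are bounded and integrable,
the two Tate integrals converge. In the orbital integral substitute `ξ = t u`: the Jacobian
`|t|` cancels the factor `|t|⁻¹`, and `W(t u) = W(t) W(u)` separates the variables. The same
computation on absolute values shows that the integrand is integrable on `ℝ × ℝ`, so Fubini
turns the Mellin transform of the orbital integral into the product of the Tate integrals.
-/

open MeasureTheory

lemma Real.sign_eq_div_abs (x : ℝ) : Real.sign x = x / |x| := by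
  rcases lt_trichotomy x 0 with hx | rfl | hx
  · rw [Real.sign_of_neg hx, abs_of_neg hx, div_neg, div_self hx.ne]
  · simp [Real.sign_zero]
  · rw [Real.sign_of_pos hx, abs_of_pos hx, div_self hx.ne']

lemma Real.sign_mul (x y : ℝ) : Real.sign (x * y) = Real.sign x * Real.sign y := by
  simp only [Real.sign_eq_div_abs, abs_mul, mul_div_mul_comm]

lemma Real.measurable_sign : Measurable Real.sign := by
  simp only [funext Real.sign_eq_div_abs]
  fun_prop

lemma integrable_mul_of_norm_le_abs_rpow {R : Type*} [NormedRing R] {f c : ℝ → R} {C s : ℝ}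
    (hs₀ : 0 < s) (hs₁ : s ≤ 1) (hf : Integrable f) (hfC : ∀ x, ‖f x‖ ≤ C)
    (hc : AEStronglyMeasurable c) (hcs : ∀ x, x ≠ 0 → ‖c x‖ ≤ |x| ^ (s - 1)) :
    Integrable (fun x => f x * c x) := by
  have hfc : AEStronglyMeasurable (fun x => f x * c x) := hf.aestronglyMeasurable.mul hc
  have hbound : ∀ᵐ x : ℝ, ‖f x * c x‖ ≤ ‖f x‖ * |x| ^ (s - 1) := by
    filter_upwards [Measure.ae_ne volume 0] with x hx
    exact (norm_mul_le _ _).trans (mul_le_mul_of_nonneg_left (hcs x hx) (norm_nonneg _))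
  rw [← integrableOn_univ, ← Set.union_compl_self (Metric.ball (0 : ℝ) 1)]
  refine IntegrableOn.union ?_ ?_
  · refine integrableOn_ball_of_norm_le_rpow (C := C) (α := 1 - s) (by simp) (by simpa) ?_ hfc
    filter_upwards [ae_restrict_of_ae hbound] with x hx
    rw [Real.norm_eq_abs, neg_sub]
    exact hx.trans (mul_le_mul_of_nonneg_right (hfC x) (by positivity))
  · refine hf.norm.integrableOn.mono' hfc.restrict ?_
    filter_upwards [ae_restrict_of_ae hbound, ae_restrict_mem measurableSet_ball.compl]
      with x hx hx₁
    have : 1 ≤ |x| := by simpa using hx₁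
    exact hx.trans (mul_le_of_le_one_right (norm_nonneg _)
      (Real.rpow_le_one_of_one_le_of_nonpos this (by linarith)))

noncomputable def unitaryChar (ε : ℕ) (τ : ℝ) (x : ℝ) : ℂ :=
  (Real.sign x : ℂ) ^ ε * ((|x| : ℝ) : ℂ) ^ (Complex.I * (τ : ℂ))

/-- The measure `χ⁻¹(x) |x|^s d^×x` of Tate's integral, as a density against `dx`. -/
noncomputable def tateWeight (ε : ℕ) (τ s : ℝ) (x : ℝ) : ℂ :=
  (unitaryChar ε τ x)⁻¹ * ((|x| ^ s * |x|⁻¹ : ℝ) : ℂ)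

section Character

variable (ε : ℕ) (τ : ℝ)

lemma unitaryChar_mul (x y : ℝ) :
    unitaryChar ε τ (x * y) = unitaryChar ε τ x * unitaryChar ε τ y := by
  simp only [unitaryChar, Real.sign_mul, abs_mul, Complex.ofReal_mul, mul_pow,
    Complex.mul_cpow_ofReal_nonneg (abs_nonneg x) (abs_nonneg y)]
  ring

lemma norm_unitaryChar {x : ℝ} (hx : x ≠ 0) : ‖unitaryChar ε τ x‖ = 1 := by
  have hsign : |Real.sign x| = 1 := by
    rcases Real.sign_apply_eq_of_ne_zero x hx with h | h <;> simp [h]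
  rw [unitaryChar, norm_mul, norm_pow, Complex.norm_real, Real.norm_eq_abs, hsign, one_pow,
    one_mul, Complex.norm_cpow_eq_rpow_re_of_pos (abs_pos.mpr hx)]
  simp

lemma measurable_unitaryChar : Measurable (unitaryChar ε τ) := by
  unfold unitaryChar
  have := Real.measurable_sign
  fun_prop

variable (s : ℝ)

lemma tateWeight_mul (x y : ℝ) :
    tateWeight ε τ s (x * y) = tateWeight ε τ s x * tateWeight ε τ s y := by
  simp only [tateWeight, unitaryChar_mul, abs_mul, mul_inv,
    Real.mul_rpow (abs_nonneg x) (abs_nonneg y), Complex.ofReal_mul]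
  ring

lemma norm_tateWeight {x : ℝ} (hx : x ≠ 0) : ‖tateWeight ε τ s x‖ = |x| ^ (s - 1) := by
  have hx' : 0 < |x| := abs_pos.mpr hx
  rw [tateWeight, norm_mul, norm_inv, norm_unitaryChar ε τ hx, inv_one, one_mul,
    Complex.norm_real, Real.norm_of_nonneg (by positivity), Real.rpow_sub_one hx'.ne',
    div_eq_mul_inv]

lemma measurable_tateWeight : Measurable (tateWeight ε τ s) := by
  unfold tateWeight
  have := measurable_unitaryChar ε τ
  fun_prop

lemma integrable_schwartz_mul_tateWeight (Φ : SchwartzMap ℝ ℂ) (hs₀ : 0 < s) (hs₁ : s ≤ 1) :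
    Integrable (fun x => Φ x * tateWeight ε τ s x) :=
  integrable_mul_of_norm_le_abs_rpow hs₀ hs₁ Φ.integrable (SchwartzMap.norm_le_seminorm ℝ Φ)
    (measurable_tateWeight ε τ s).aestronglyMeasurable fun _ hx => (norm_tateWeight ε τ s hx).le

end Character

section MapMulSubstitution

variable {𝕜 : Type*} [RCLike 𝕜] {W : ℝ → 𝕜}
  (hWmul : ∀ x y, x ≠ 0 → y ≠ 0 → W (x * y) = W x * W y) (g : ℝ → 𝕜) {t : ℝ} (ht : t ≠ 0)
include hWmul ht

lemma mul_comp_div_ae_eq_of_map_mul :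
    (fun ξ => W ξ * g (ξ / t)) =ᵐ[volume] fun ξ => W t * (g (ξ / t) * W (ξ / t)) := by
  filter_upwards [Measure.ae_ne volume 0] with ξ hξ
  have : W ξ = W t * W (ξ / t) := by
    rw [← hWmul t _ ht (div_ne_zero hξ ht), mul_div_cancel₀ ξ ht]
  rw [this]
  ring

lemma integral_mul_comp_div_of_map_mul :
    ∫ ξ, W ξ * g (ξ / t) = |t| • (W t * ∫ u, g u * W u) := by
  rw [integral_congr_ae (mul_comp_div_ae_eq_of_map_mul hWmul g ht), integral_const_mul,
    Measure.integral_comp_div (fun u => g u * W u), mul_smul_comm]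

lemma MeasureTheory.Integrable.mul_comp_div_of_map_mul {g : ℝ → 𝕜}
    (hgW : Integrable fun x => g x * W x) :
    Integrable fun ξ => W ξ * g (ξ / t) :=
  ((hgW.comp_div ht).const_mul (W t)).congr (mul_comp_div_ae_eq_of_map_mul hWmul g ht).symm

end MapMulSubstitution

/-- The orbital integral `O_ξ(f ⊗ g)`, i.e. the multiplicative convolution of `f` and `g`. -/
noncomputable def mulConv (f g : ℝ → ℂ) (ξ : ℝ) : ℂ :=
  ∫ t : ℝ, f t * g (ξ / t) * ((|t|⁻¹ : ℝ) : ℂ)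

section MellinMulConv

variable {W f g : ℝ → ℂ} (hW : Measurable W)
  (hWmul : ∀ x y, x ≠ 0 → y ≠ 0 → W (x * y) = W x * W y)
  (hf : Measurable f) (hg : Measurable g)
  (hfW : Integrable fun x => f x * W x) (hgW : Integrable fun x => g x * W x)
include hW hWmul hf hg hfW hgW

lemma integrable_mulConv_kernel :
    Integrable (fun p : ℝ × ℝ => W p.1 * (f p.2 * g (p.1 / p.2) * ((|p.2|⁻¹ : ℝ) : ℂ)))
      (volume.prod volume) := by
  have hnormW : ∀ x y, x ≠ 0 → y ≠ 0 → ‖W (x * y)‖ = ‖W x‖ * ‖W y‖ := fun x y hx hy => by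
    rw [hWmul x y hx hy, norm_mul]
  refine (integrable_prod_iff' (by fun_prop)).2 ⟨?_, ?_⟩
  · filter_upwards [Measure.ae_ne volume 0] with t ht
    refine ((hgW.mul_comp_div_of_map_mul hWmul ht).mul_const
      (f t * ((|t|⁻¹ : ℝ) : ℂ))).congr ?_
    filter_upwards with ξ
    ring
  · refine ((hfW.norm.mul_const (∫ u, ‖g u‖ * ‖W u‖))).congr ?_
    filter_upwards [Measure.ae_ne volume 0] with t ht
    have hnorm :=
      integral_mul_comp_div_of_map_mul (W := fun x => ‖W x‖) hnormW (fun u => ‖g u‖) ht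
    simp only [norm_mul, norm_inv, Complex.norm_real, Real.norm_eq_abs, abs_abs]
    calc ‖f t‖ * ‖W t‖ * ∫ u, ‖g u‖ * ‖W u‖
        = ‖f t‖ * |t|⁻¹ * (|t| • (‖W t‖ * ∫ u, ‖g u‖ * ‖W u‖)) := by
          rw [smul_eq_mul]
          field_simp [abs_ne_zero.mpr ht]
      _ = ∫ ξ, ‖W ξ‖ * (‖f t‖ * ‖g (ξ / t)‖ * |t|⁻¹) := by
          rw [← hnorm, ← integral_const_mul]
          congr 1 with ξ
          ring

theorem integrable_mul_mulConv : Integrable fun ξ => W ξ * mulConv f g ξ := by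
  refine (integrable_mulConv_kernel hW hWmul hf hg hfW hgW).integral_prod_left.congr ?_
  filter_upwards with ξ
  exact integral_const_mul _ _

theorem integral_mul_mulConv :
    ∫ ξ, W ξ * mulConv f g ξ = (∫ x, f x * W x) * ∫ x, g x * W x := by
  have hinner : (fun t => ∫ ξ, W ξ * (f t * g (ξ / t) * ((|t|⁻¹ : ℝ) : ℂ))) =ᵐ[volume]
      fun t => f t * W t * ∫ x, g x * W x := by
    filter_upwards [Measure.ae_ne volume 0] with t ht
    calc ∫ ξ, W ξ * (f t * g (ξ / t) * ((|t|⁻¹ : ℝ) : ℂ))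
        = f t * ((|t|⁻¹ : ℝ) : ℂ) * ∫ ξ, W ξ * g (ξ / t) := by
          rw [← integral_const_mul]
          congr 1 with ξ
          ring
      _ = f t * W t * ∫ x, g x * W x := by
          rw [integral_mul_comp_div_of_map_mul hWmul g ht, Complex.real_smul]
          push_cast
          field_simp [abs_ne_zero.mpr ht]
  calc ∫ ξ, W ξ * mulConv f g ξ
      = ∫ ξ, ∫ t, W ξ * (f t * g (ξ / t) * ((|t|⁻¹ : ℝ) : ℂ)) := by
        simp only [mulConv, integral_const_mul]
    _ = ∫ t, ∫ ξ, W ξ * (f t * g (ξ / t) * ((|t|⁻¹ : ℝ) : ℂ)) :=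
        integral_integral_swap (integrable_mulConv_kernel hW hWmul hf hg hfW hgW)
    _ = ∫ t, f t * W t * ∫ x, g x * W x := integral_congr_ae hinner
    _ = (∫ x, f x * W x) * ∫ x, g x * W x := integral_mul_const _ _

end MellinMulConv

/-- The Mellin transform of the orbital integrals of `Φ₁ ⊗ Φ₂` factors as a product of
Tate integrals at `s = 1/2`, for the unitary character `χ = sgn^ε |·|^{iτ}`, with all
integrals absolutely convergent. -/
theorem stmt_5 (Φ₁ Φ₂ : SchwartzMap ℝ ℂ) (ε : ℕ) (τ : ℝ) (χ : ℝ → ℂ)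
    (hχ : ∀ x : ℝ, χ x = (Real.sign x : ℂ) ^ ε * ((|x| : ℝ) : ℂ) ^ (Complex.I * (τ : ℂ))) :
    Integrable (fun x : ℝ => Φ₁ x * (χ x)⁻¹ * ((|x| ^ ((1:ℝ)/2) * |x|⁻¹ : ℝ) : ℂ)) ∧
    Integrable (fun x : ℝ => Φ₂ x * (χ x)⁻¹ * ((|x| ^ ((1:ℝ)/2) * |x|⁻¹ : ℝ) : ℂ)) ∧
    Integrable (fun ξ : ℝ => ((|ξ| ^ ((1:ℝ)/2) * |ξ|⁻¹ : ℝ) : ℂ) * (χ ξ)⁻¹ *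
        ∫ t : ℝ, Φ₁ t * Φ₂ (ξ / t) * ((|t|⁻¹ : ℝ) : ℂ)) ∧
    (∫ ξ : ℝ, ((|ξ| ^ ((1:ℝ)/2) * |ξ|⁻¹ : ℝ) : ℂ) * (χ ξ)⁻¹ *
        ∫ t : ℝ, Φ₁ t * Φ₂ (ξ / t) * ((|t|⁻¹ : ℝ) : ℂ))
      = (∫ x : ℝ, Φ₁ x * (χ x)⁻¹ * ((|x| ^ ((1:ℝ)/2) * |x|⁻¹ : ℝ) : ℂ)) *
        (∫ x : ℝ, Φ₂ x * (χ x)⁻¹ * ((|x| ^ ((1:ℝ)/2) * |x|⁻¹ : ℝ) : ℂ)) := by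
  obtain rfl : χ = unitaryChar ε τ := funext hχ
  set W := tateWeight ε τ (1 / 2)
  have hW : Measurable W := measurable_tateWeight ε τ _
  have hWmul : ∀ x y, x ≠ 0 → y ≠ 0 → W (x * y) = W x * W y :=
    fun x y _ _ => tateWeight_mul ε τ _ x y
  have hΦW (Φ : SchwartzMap ℝ ℂ) : Integrable fun x => Φ x * W x :=
    integrable_schwartz_mul_tateWeight ε τ _ Φ (by norm_num) (by norm_num)
  have hmeas (Φ : SchwartzMap ℝ ℂ) : Measurable Φ := Φ.continuous.measurable
  have hTate (Φ : SchwartzMap ℝ ℂ) : (fun x => Φ x * (unitaryChar ε τ x)⁻¹ *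
      ((|x| ^ ((1:ℝ)/2) * |x|⁻¹ : ℝ) : ℂ)) = fun x => Φ x * W x :=
    funext fun x => mul_assoc _ _ _
  have hMellin : (fun ξ : ℝ => ((|ξ| ^ ((1:ℝ)/2) * |ξ|⁻¹ : ℝ) : ℂ) * (unitaryChar ε τ ξ)⁻¹ *
      ∫ t : ℝ, Φ₁ t * Φ₂ (ξ / t) * ((|t|⁻¹ : ℝ) : ℂ)) = fun ξ => W ξ * mulConv Φ₁ Φ₂ ξ :=
    funext fun ξ => by rw [mul_comm (Complex.ofReal _)]; rfl
  rw [hTate, hTate, hMellin]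
  exact ⟨hΦW Φ₁, hΦW Φ₂,
    integrable_mul_mulConv hW hWmul (hmeas Φ₁) (hmeas Φ₂) (hΦW Φ₁) (hΦW Φ₂),
    integral_mul_mulConv hW hWmul (hmeas Φ₁) (hmeas Φ₂) (hΦW Φ₁) (hΦW Φ₂)⟩
end

section
/- Let F be a field, w = ((0,1),(1,0)) ∈ GL₂(F), and for x, y ∈ F with 1 + xy ≠ 0 let ι(x,y) = ((1,x),(y,1+xy)). Then w · ι(x,y) · w⁻¹ = d₁ · ι(y(1+xy), x/(1+xy)) · d₂ for some diagonal matrices d₁, d₂ ∈ GL₂(F); i.e. conjugation by w sends ι(x,y) into the same double coset of the diagonal torus as ι(y(1+xy), x/(1+xy)). -/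
namespace Matrix

theorem swap_fin_two_mul_self {R : Type*} [Semiring R] :
    (!![0, 1; 1, 0] : Matrix (Fin 2) (Fin 2) R) * !![0, 1; 1, 0] = 1 := by
  rw [mul_fin_two, one_fin_two]
  simp

theorem inv_swap_fin_two {R : Type*} [CommRing R] :
    (!![0, 1; 1, 0] : Matrix (Fin 2) (Fin 2) R)⁻¹ = !![0, 1; 1, 0] :=
  inv_eq_left_inv swap_fin_two_mul_self

theorem swap_conj_fin_two {R : Type*} [Semiring R] (p q r s : R) :
    (!![0, 1; 1, 0] : Matrix (Fin 2) (Fin 2) R) * !![p, q; r, s] * !![0, 1; 1, 0]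
      = !![s, r; q, p] := by
  simp only [mul_fin_two]
  simp

theorem diag_mul_mul_diag_fin_two {R : Type*} [Semiring R] (a b c d p q r s : R) :
    !![a, 0; 0, b] * !![p, q; r, s] * !![c, 0; 0, d]
      = !![a * p * c, a * q * d; b * r * c, b * s * d] := by
  simp only [mul_fin_two]
  simp

end Matrix

/-- Conjugation by `w = ((0,1),(1,0))` sends `ι(x,y)` into the same diagonal double
coset as `ι(y(1+xy), x/(1+xy))`. -/
theorem stmt_10 {F : Type*} [Field F] (x y : F) (h : 1 + x * y ≠ 0) :
    ∃ a b c d : F, a ≠ 0 ∧ b ≠ 0 ∧ c ≠ 0 ∧ d ≠ 0 ∧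
      (!![0, 1; 1, 0] : Matrix (Fin 2) (Fin 2) F) * !![1, x; y, 1 + x * y] * (!![0, 1; 1, 0])⁻¹
        = !![a, 0; 0, b] *
            !![1, y * (1 + x * y);
               x / (1 + x * y), 1 + (y * (1 + x * y)) * (x / (1 + x * y))] *
            !![c, 0; 0, d] := by
  -- With `t = 1 + xy`, `w ι(x,y) w⁻¹ = ((t, y), (x, 1))`: scale both rows by `t` and the
  -- second column by `t⁻²`.
  refine ⟨_, _, 1, ((1 + x * y) * (1 + x * y))⁻¹, h, h, one_ne_zero,
    inv_ne_zero (mul_ne_zero h h), ?_⟩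
  rw [Matrix.inv_swap_fin_two, Matrix.swap_conj_fin_two, Matrix.diag_mul_mul_diag_fin_two]
  -- `field_simp` normalises `x * y` to `y * x`, so it needs the commuted nonvanishing fact.
  have hyx : 1 + y * x ≠ 0 := by rwa [mul_comm]
  simp only [EmbeddingLike.apply_eq_iff_eq, Matrix.vecCons_inj, and_true]
  refine ⟨⟨by ring, ?_⟩, ?_, ?_⟩ <;> field_simp
end

section
/- Let Φ be a Schwartz function on ℝ² of the product form Φ(x,y) = φ₁(x)φ₂(y) with φ₁, φ₂ Schwartz functions on ℝ, and for ξ ≠ 0 set f(ξ) = ∫_{ℝ^×} Φ(t, ξ/t) |t|⁻¹ dt. Then lim_{ξ→0} f(ξ)/(−ln|ξ|) = 2 φ₁(0) φ₂(0). -/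
open Filter

section Aux

open MeasureTheory Set Filter

lemma even_set_integral (f : ℝ → ℝ) (T : Set ℝ) (hT : MeasurableSet T) :
    ∫ t in {t : ℝ | |t| ∈ T}, f |t| = 2 * ∫ x in T ∩ Set.Ioi 0, f x := by
  have hset : MeasurableSet {t : ℝ | |t| ∈ T} := measurable_abs hT
  rw [← integral_indicator hset]
  have : ∀ t : ℝ, ({t : ℝ | |t| ∈ T}).indicator (fun t => f |t|) t = T.indicator f |t| := by
    intro t
    by_cases h : |t| ∈ T <;> simp [Set.indicator, h]
  simp_rw [this]
  rw [integral_comp_abs (f := T.indicator f), setIntegral_indicator hT, Set.inter_comm]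

set_option maxHeartbeats 1000000 in
lemma key_bound (φ₁ φ₂ : SchwartzMap ℝ ℂ) {M₁ M₂ K₁ K₂ L₁ L₂ : ℝ}
    (hM₁0 : 0 ≤ M₁) (hM₂0 : 0 ≤ M₂) (hK₁0 : 0 ≤ K₁) (hK₂0 : 0 ≤ K₂)
    (hL₁0 : 0 ≤ L₁) (hL₂0 : 0 ≤ L₂)
    (hM₁ : ∀ x, ‖φ₁ x‖ ≤ M₁) (hM₂ : ∀ x, ‖φ₂ x‖ ≤ M₂)
    (hK₁ : ∀ x, x ^ 2 * ‖φ₁ x‖ ≤ K₁) (hK₂ : ∀ x, |x| * ‖φ₂ x‖ ≤ K₂)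
    (hL₁ : ∀ x, ‖φ₁ x - φ₁ 0‖ ≤ L₁ * |x|) (hL₂ : ∀ x, ‖φ₂ x - φ₂ 0‖ ≤ L₂ * |x|)
    {ξ : ℝ} (hξ0 : ξ ≠ 0) (hξ1 : |ξ| < 1) :
    ‖(∫ t : ℝ, (|t|⁻¹ : ℝ) • (φ₁ t * φ₂ (ξ / t))) -
      ((-2 * Real.log |ξ|) : ℝ) • (φ₁ 0 * φ₂ 0)‖
      ≤ 2*M₁*K₂ + 2*(L₁*M₂ + M₁*L₂) + 2*K₁*M₂*Real.pi := by
  have hξpos : 0 < |ξ| := abs_pos.mpr hξ0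
  set F : ℝ → ℂ := fun t => (|t|⁻¹ : ℝ) • (φ₁ t * φ₂ (ξ / t)) with hF
  set c : ℂ := φ₁ 0 * φ₂ 0 with hc
  have hcnorm : ‖c‖ ≤ M₁ * M₂ := by
    rw [hc, norm_mul]
    exact mul_le_mul (hM₁ 0) (hM₂ 0) (norm_nonneg _) hM₁0
  set S : Set ℝ := {t : ℝ | |t| ∈ Set.Icc |ξ| 1} with hSdef
  have hS : MeasurableSet S := measurable_abs measurableSet_Icc
  set G : ℝ → ℝ := S.indicator (fun t => |t|⁻¹) with hG
  set D : ℝ → ℂ := fun t => F t - G t • c with hD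
  -- basic bounds on F
  have hF0 : F 0 = 0 := by simp [hF]
  have hFb1 : ∀ t : ℝ, t ≠ 0 → ‖F t‖ ≤ M₁ * K₂ / |ξ| := by
    intro t ht
    have htpos : 0 < |t| := abs_pos.mpr ht
    have h2 : ‖φ₂ (ξ / t)‖ ≤ K₂ * |t| / |ξ| := by
      have h := hK₂ (ξ / t)
      rw [abs_div] at h
      rw [le_div_iff₀ hξpos]
      calc ‖φ₂ (ξ/t)‖ * |ξ| = (|ξ| / |t| * ‖φ₂ (ξ/t)‖) * |t| := by field_simp
        _ ≤ K₂ * |t| := mul_le_mul_of_nonneg_right h htpos.le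
    have : ‖F t‖ = |t|⁻¹ * (‖φ₁ t‖ * ‖φ₂ (ξ / t)‖) := by
      rw [hF]; simp [norm_smul, abs_of_nonneg, norm_mul]
    rw [this]
    calc |t|⁻¹ * (‖φ₁ t‖ * ‖φ₂ (ξ / t)‖)
        ≤ |t|⁻¹ * (M₁ * (K₂ * |t| / |ξ|)) := by
          apply mul_le_mul_of_nonneg_left _ (by positivity)
          exact mul_le_mul (hM₁ t) h2 (norm_nonneg _) hM₁0
      _ = M₁ * K₂ / |ξ| * (|t|⁻¹ * |t|) := by ring
      _ = M₁ * K₂ / |ξ| := by rw [inv_mul_cancel₀ htpos.ne']; ring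
  have hFb2 : ∀ t : ℝ, 1 < |t| → ‖F t‖ ≤ 2 * K₁ * M₂ * (1 + t ^ 2)⁻¹ := by
    intro t ht
    have htpos : 0 < |t| := lt_trans one_pos ht
    have ht0 : t ≠ 0 := by intro h; rw [h] at htpos; simp at htpos
    have h1 : ‖φ₁ t‖ ≤ K₁ / t ^ 2 := by
      rw [le_div_iff₀ (by positivity)]
      linarith [hK₁ t]
    have : ‖F t‖ = |t|⁻¹ * (‖φ₁ t‖ * ‖φ₂ (ξ / t)‖) := by
      rw [hF]; simp [norm_smul, abs_of_nonneg, norm_mul]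
    rw [this]
    have hsq : (1:ℝ) ≤ t ^ 2 := by nlinarith [sq_abs t]
    calc |t|⁻¹ * (‖φ₁ t‖ * ‖φ₂ (ξ / t)‖)
        ≤ 1 * (K₁ / t ^ 2 * M₂) := by
          apply mul_le_mul _ _ (by positivity) (by norm_num)
          · exact inv_le_one_of_one_le₀ ht.le
          · exact mul_le_mul h1 (hM₂ _) (norm_nonneg _) (by positivity)
      _ = K₁ * M₂ * (t ^ 2)⁻¹ := by ring
      _ ≤ K₁ * M₂ * (2 * (1 + t ^ 2)⁻¹) := by
          apply mul_le_mul_of_nonneg_left _ (by positivity)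
          rw [inv_eq_one_div, show (2:ℝ) * (1+t^2)⁻¹ = 2/(1+t^2) by rw [div_eq_mul_inv],
            div_le_div_iff₀ (by positivity) (by positivity)]
          nlinarith
      _ = 2 * K₁ * M₂ * (1 + t ^ 2)⁻¹ := by ring
  -- integrability of F
  have hFm : AEStronglyMeasurable F (volume : Measure ℝ) := by
    apply Measurable.aestronglyMeasurable
    exact (measurable_abs.inv).smul
      ((φ₁.continuous.measurable).mul
        ((φ₂.continuous.measurable).comp (measurable_const.div measurable_id)))
  have hbndF_int : Integrable (fun t : ℝ =>
      (Set.indicator (Set.Icc (-1:ℝ) 1) (fun _ => M₁*K₂/|ξ|) t) + 2*K₁*M₂*(1+t^2)⁻¹) := by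
    apply Integrable.add
    · rw [integrable_indicator_iff measurableSet_Icc]
      exact integrableOn_const (by rw [Real.volume_Icc]; exact ENNReal.ofReal_ne_top)
    · exact integrable_inv_one_add_sq.const_mul _
  have hFint : Integrable F := by
    refine hbndF_int.mono' hFm (Filter.Eventually.of_forall fun t => ?_)
    by_cases ht0 : t = 0
    · rw [ht0, hF0]
      simp only [norm_zero]
      apply add_nonneg (Set.indicator_nonneg (fun _ _ => by positivity) _) (by positivity)
    by_cases ht1 : |t| ≤ 1
    · have hmem : t ∈ Set.Icc (-1:ℝ) 1 := by rw [Set.mem_Icc, ← abs_le]; exact ht1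
      rw [Set.indicator_of_mem hmem]
      have := hFb1 t ht0
      have h2 : (0:ℝ) ≤ 2*K₁*M₂*(1+t^2)⁻¹ := by positivity
      linarith
    · have hmem : t ∉ Set.Icc (-1:ℝ) 1 := by rw [Set.mem_Icc, ← abs_le]; exact ht1
      rw [Set.indicator_of_notMem hmem, zero_add]
      exact hFb2 t (not_le.mp ht1)
  -- integrability of G and its integral
  have hGm : Measurable G := (measurable_abs.inv).indicator hS
  have hGint : Integrable G := by
    refine Integrable.mono' (g := fun t => Set.indicator (Set.Icc (-1:ℝ) 1) (fun _ => |ξ|⁻¹) t)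
      ?_ hGm.aestronglyMeasurable (Filter.Eventually.of_forall fun t => ?_)
    · rw [integrable_indicator_iff measurableSet_Icc]
      exact integrableOn_const (by rw [Real.volume_Icc]; exact ENNReal.ofReal_ne_top)
    · by_cases htS : t ∈ S
      · have h1 : |ξ| ≤ |t| := htS.1
        have h2 : |t| ≤ 1 := htS.2
        have hmem : t ∈ Set.Icc (-1:ℝ) 1 := by rw [Set.mem_Icc, ← abs_le]; exact h2
        rw [hG, Set.indicator_of_mem htS]
        simp only [Set.indicator_of_mem hmem, Real.norm_eq_abs, abs_of_nonneg
          (inv_nonneg.mpr (abs_nonneg t))]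
        exact inv_anti₀ hξpos h1
      · rw [hG, Set.indicator_of_notMem htS]
        simp only [norm_zero]
        exact Set.indicator_nonneg (fun _ _ => by positivity) _
  have hGcint : Integrable (fun t => G t • c) := hGint.smul_const c
  have hGval : ∫ t, G t = -2 * Real.log |ξ| := by
    rw [hG, integral_indicator hS]
    have heq : ∫ t in S, |t|⁻¹ = 2 * ∫ x in Set.Icc |ξ| 1 ∩ Set.Ioi 0, x⁻¹ :=
      even_set_integral (fun s => s⁻¹) (Set.Icc |ξ| 1) measurableSet_Icc
    have hinter : Set.Icc |ξ| 1 ∩ Set.Ioi 0 = Set.Icc |ξ| 1 :=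
      Set.inter_eq_left.mpr (fun x hx => lt_of_lt_of_le hξpos hx.1)
    rw [heq, hinter, integral_Icc_eq_integral_Ioc, ← intervalIntegral.integral_of_le hξ1.le,
      integral_inv (by rw [Set.uIcc_of_le hξ1.le]; intro h; exact absurd h.1 (not_le.mpr hξpos)),
      one_div, Real.log_inv]
    ring
  have hGc : ∫ t, G t • c = ((-2 * Real.log |ξ|) : ℝ) • c := by
    rw [integral_smul_const, hGval]
  -- rewrite goal as a single integral
  have hDint : Integrable D := hFint.sub hGcint
  have hsplit : (∫ t : ℝ, (|t|⁻¹ : ℝ) • (φ₁ t * φ₂ (ξ / t))) -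
      ((-2 * Real.log |ξ|) : ℝ) • (φ₁ 0 * φ₂ 0) = ∫ t, D t := by
    rw [hD]
    rw [integral_sub hFint hGcint, hGc]
  rw [hsplit]
  -- regions
  set A : Set ℝ := {t : ℝ | |t| < |ξ|} with hAdef
  set Cs : Set ℝ := {t : ℝ | 1 < |t|} with hCdef
  have hA : MeasurableSet A := measurable_abs measurableSet_Iio
  have hC : MeasurableSet Cs := measurable_abs measurableSet_Ioi
  have hAc : Aᶜ = S ∪ Cs := by
    ext t
    simp only [hAdef, hSdef, hCdef, Set.mem_compl_iff, Set.mem_setOf_eq, Set.mem_union,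
      Set.mem_Icc, not_lt]
    constructor
    · intro h
      rcases le_or_gt |t| 1 with h1 | h1
      · exact Or.inl ⟨h, h1⟩
      · exact Or.inr h1
    · rintro (⟨h, _⟩ | h)
      · exact h
      · exact le_trans hξ1.le h.le
  have hdisj : Disjoint S Cs := by
    rw [Set.disjoint_left]
    intro t htS htC
    exact absurd htS.2 (not_le.mpr htC)
  have hnormint : Integrable (fun t => ‖D t‖) := hDint.norm
  have hsplit2 : ∫ t, ‖D t‖ =
      (∫ t in A, ‖D t‖) + ((∫ t in S, ‖D t‖) + (∫ t in Cs, ‖D t‖)) := by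
    rw [← integral_add_compl hA hnormint, hAc,
      setIntegral_union hdisj hC hnormint.integrableOn hnormint.integrableOn]
  -- bound on A
  have hDA : ∀ t ∈ A, ‖D t‖ ≤ M₁ * K₂ / |ξ| := by
    intro t ht
    have hnot : t ∉ S := by
      intro hmem
      exact absurd ht (not_lt.mpr hmem.1)
    have hDt : D t = F t := by
      rw [hD]; simp only [hG, Set.indicator_of_notMem hnot, zero_smul, sub_zero]
    rw [hDt]
    by_cases ht0 : t = 0
    · rw [ht0, hF0, norm_zero]; positivity
    · exact hFb1 t ht0
  have hIA : ∫ t in A, ‖D t‖ ≤ 2 * (M₁ * K₂) := by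
    have hAeq : A = Set.Ioo (-|ξ|) |ξ| := by
      ext t
      simp only [hAdef, Set.mem_setOf_eq, Set.mem_Ioo]
      exact abs_lt
    have hvol : volume A ≠ ⊤ := by
      rw [hAeq, Real.volume_Ioo]; exact ENNReal.ofReal_ne_top
    have h1 : ∫ t in A, ‖D t‖ ≤ ∫ _ in A, M₁ * K₂ / |ξ| := by
      refine setIntegral_mono_on hnormint.integrableOn ?_ hA hDA
      exact integrableOn_const hvol
    rw [setIntegral_const] at h1
    have hvolval : (volume A).toReal = 2 * |ξ| := by
      rw [hAeq, Real.volume_Ioo, ENNReal.toReal_ofReal (by linarith)]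
      ring
    rw [measureReal_def, hvolval, smul_eq_mul] at h1
    calc ∫ t in A, ‖D t‖ ≤ 2 * |ξ| * (M₁ * K₂ / |ξ|) := h1
      _ = 2 * (M₁ * K₂) := by field_simp
  -- bound on Cs
  have hDC : ∀ t ∈ Cs, ‖D t‖ ≤ 2 * K₁ * M₂ * (1 + t ^ 2)⁻¹ := by
    intro t ht
    have ht1 : 1 < |t| := ht
    have hnot : t ∉ S := by
      intro hmem
      exact absurd hmem.2 (not_le.mpr ht1)
    have hDt : D t = F t := by
      rw [hD]; simp only [hG, Set.indicator_of_notMem hnot, zero_smul, sub_zero]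
    rw [hDt]
    exact hFb2 t ht1
  have hIC : ∫ t in Cs, ‖D t‖ ≤ 2 * K₁ * M₂ * Real.pi := by
    have hint : Integrable (fun t : ℝ => 2 * K₁ * M₂ * (1 + t ^ 2)⁻¹) :=
      integrable_inv_one_add_sq.const_mul _
    have h1 : ∫ t in Cs, ‖D t‖ ≤ ∫ t in Cs, 2 * K₁ * M₂ * (1 + t ^ 2)⁻¹ :=
      setIntegral_mono_on hnormint.integrableOn hint.integrableOn hC hDC
    have h2 : ∫ t in Cs, 2 * K₁ * M₂ * (1 + t ^ 2)⁻¹ ≤ ∫ t : ℝ, 2 * K₁ * M₂ * (1 + t ^ 2)⁻¹ :=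
      setIntegral_le_integral hint (Filter.Eventually.of_forall (fun t => by positivity))
    have h3 : ∫ t : ℝ, 2 * K₁ * M₂ * (1 + t ^ 2)⁻¹ = 2 * K₁ * M₂ * Real.pi := by
      rw [integral_const_mul, integral_univ_inv_one_add_sq]
    linarith
  -- bound on S
  have hDB : ∀ t ∈ S, ‖D t‖ ≤ L₁ * M₂ + (M₁ * L₂ * |ξ|) * (|t| ^ 2)⁻¹ := by
    intro t ht
    have h1 : |ξ| ≤ |t| := ht.1
    have h2 : |t| ≤ 1 := ht.2
    have htpos : 0 < |t| := lt_of_lt_of_le hξpos h1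
    have hDt : D t = (|t|⁻¹ : ℝ) • (φ₁ t * φ₂ (ξ / t) - c) := by
      rw [hD, hF]
      simp only [hG, Set.indicator_of_mem ht, smul_sub]
    have hL₂' : ‖φ₂ (ξ / t) - φ₂ 0‖ ≤ L₂ * (|ξ| / |t|) := by
      have := hL₂ (ξ / t); rwa [abs_div] at this
    have hkey : ‖φ₁ t * φ₂ (ξ / t) - c‖ ≤ L₁ * |t| * M₂ + M₁ * (L₂ * (|ξ| / |t|)) := by
      have hexp : φ₁ t * φ₂ (ξ / t) - c
          = (φ₁ t - φ₁ 0) * φ₂ (ξ / t) + φ₁ 0 * (φ₂ (ξ / t) - φ₂ 0) := by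
        rw [hc]; ring
      rw [hexp]
      refine (norm_add_le _ _).trans ?_
      rw [norm_mul, norm_mul]
      exact add_le_add
        (mul_le_mul (hL₁ t) (hM₂ _) (norm_nonneg _) (by positivity))
        (mul_le_mul (hM₁ 0) hL₂' (norm_nonneg _) hM₁0)
    rw [hDt, norm_smul, Real.norm_eq_abs, abs_of_nonneg (inv_nonneg.mpr (abs_nonneg t))]
    calc |t|⁻¹ * ‖φ₁ t * φ₂ (ξ / t) - c‖
        ≤ |t|⁻¹ * (L₁ * |t| * M₂ + M₁ * (L₂ * (|ξ| / |t|))) :=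
          mul_le_mul_of_nonneg_left hkey (by positivity)
      _ = L₁ * M₂ + (M₁ * L₂ * |ξ|) * (|t| ^ 2)⁻¹ := by
          obtain ⟨a, ha, hae⟩ : ∃ a : ℝ, a ≠ 0 ∧ |t| = a := ⟨|t|, htpos.ne', rfl⟩
          rw [hae]
          field_simp
  have hIB : ∫ t in S, ‖D t‖ ≤ 2 * (L₁ * M₂ + M₁ * L₂) := by
    have hSsub : S ⊆ Set.Icc (-1:ℝ) 1 := by
      intro t ht
      rw [Set.mem_Icc, ← abs_le]
      exact ht.2
    have hSvol : volume S ≠ ⊤ := by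
      refine ne_top_of_le_ne_top ?_ (measure_mono hSsub)
      rw [Real.volume_Icc]; exact ENNReal.ofReal_ne_top
    have hbm : Measurable (fun t : ℝ => L₁ * M₂ + (M₁ * L₂ * |ξ|) * (|t| ^ 2)⁻¹) := by
      exact measurable_const.add (((measurable_abs.pow_const 2).inv).const_mul _)
    have hbint : IntegrableOn (fun t : ℝ => L₁ * M₂ + (M₁ * L₂ * |ξ|) * (|t| ^ 2)⁻¹) S := by
      refine Measure.integrableOn_of_bounded (M := L₁ * M₂ + (M₁ * L₂ * |ξ|) * (|ξ| ^ 2)⁻¹)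
        hSvol hbm.aestronglyMeasurable ?_
      refine (ae_restrict_iff' hS).mpr (Filter.Eventually.of_forall fun t ht => ?_)
      have h1 : |ξ| ≤ |t| := ht.1
      have hb : (|t| ^ 2)⁻¹ ≤ (|ξ| ^ 2)⁻¹ := by
        apply inv_anti₀ (by positivity)
        exact pow_le_pow_left₀ hξpos.le h1 2
      rw [Real.norm_eq_abs, abs_of_nonneg (by positivity)]
      exact add_le_add_right (mul_le_mul_of_nonneg_left hb (by positivity)) _
    have h1 : ∫ t in S, ‖D t‖ ≤ ∫ t in S, (L₁ * M₂ + (M₁ * L₂ * |ξ|) * (|t| ^ 2)⁻¹) :=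
      setIntegral_mono_on hnormint.integrableOn hbint hS hDB
    have h2 : ∫ t in S, (L₁ * M₂ + (M₁ * L₂ * |ξ|) * (|t| ^ 2)⁻¹)
        = 2 * ∫ x in Set.Icc |ξ| 1 ∩ Set.Ioi 0, (L₁ * M₂ + (M₁ * L₂ * |ξ|) * (x ^ 2)⁻¹) :=
      even_set_integral (fun s => L₁ * M₂ + (M₁ * L₂ * |ξ|) * (s ^ 2)⁻¹)
        (Set.Icc |ξ| 1) measurableSet_Icc
    have hinter : Set.Icc |ξ| 1 ∩ Set.Ioi 0 = Set.Icc |ξ| 1 :=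
      Set.inter_eq_left.mpr (fun x hx => lt_of_lt_of_le hξpos hx.1)
    have h0notin : (0:ℝ) ∉ Set.uIcc |ξ| 1 := by
      rw [Set.uIcc_of_le hξ1.le]
      intro h
      exact absurd h.1 (not_le.mpr hξpos)
    have hii1 : IntervalIntegrable (fun x : ℝ => (M₁ * L₂ * |ξ|) * (x ^ 2)⁻¹) volume |ξ| 1 := by
      have hz : IntervalIntegrable (fun x : ℝ => x ^ (-2 : ℤ)) volume |ξ| 1 :=
        intervalIntegral.intervalIntegrable_zpow (Or.inr h0notin)
      refine (hz.const_mul (M₁ * L₂ * |ξ|)).congr_ae ?_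
      refine Filter.EventuallyEq.of_eq (funext fun x => ?_)
      simp [zpow_neg, zpow_two, pow_two]
    have hii2 : IntervalIntegrable (fun _ : ℝ => L₁ * M₂) volume |ξ| 1 :=
      intervalIntegrable_const
    have hzval : ∫ x in (|ξ|)..1, (x ^ 2)⁻¹ = |ξ|⁻¹ - 1 := by
      have hcongr : ∫ x in (|ξ|)..1, (x ^ 2)⁻¹ = ∫ x in (|ξ|)..1, x ^ (-2 : ℤ) := by
        apply intervalIntegral.integral_congr
        intro x _
        simp [zpow_neg, zpow_two, pow_two]
      rw [hcongr, integral_zpow (Or.inr ⟨by norm_num, h0notin⟩)]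
      norm_num
      ring
    have hval : ∫ x in Set.Icc |ξ| 1, (L₁ * M₂ + (M₁ * L₂ * |ξ|) * (x ^ 2)⁻¹)
        = (1 - |ξ|) * (L₁ * M₂) + (M₁ * L₂ * |ξ|) * (|ξ|⁻¹ - 1) := by
      rw [integral_Icc_eq_integral_Ioc, ← intervalIntegral.integral_of_le hξ1.le,
        intervalIntegral.integral_add hii2 hii1, intervalIntegral.integral_const,
        intervalIntegral.integral_const_mul, hzval, smul_eq_mul]
    have hfinal : (1 - |ξ|) * (L₁ * M₂) + (M₁ * L₂ * |ξ|) * (|ξ|⁻¹ - 1)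
        ≤ L₁ * M₂ + M₁ * L₂ := by
      have e : (M₁ * L₂ * |ξ|) * (|ξ|⁻¹ - 1) = M₁ * L₂ * (1 - |ξ|) := by
        field_simp
      rw [e]
      nlinarith [mul_nonneg hL₁0 hM₂0, mul_nonneg hM₁0 hL₂0]
    rw [h2, hinter, hval] at h1
    linarith
  -- conclusion
  calc ‖∫ t, D t‖ ≤ ∫ t, ‖D t‖ := norm_integral_le_integral_norm _
    _ = (∫ t in A, ‖D t‖) + ((∫ t in S, ‖D t‖) + (∫ t in Cs, ‖D t‖)) := hsplit2
    _ ≤ 2 * (M₁ * K₂) + (2 * (L₁ * M₂ + M₁ * L₂) + 2 * K₁ * M₂ * Real.pi) := by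
      exact add_le_add hIA (add_le_add hIB hIC)
    _ = 2*M₁*K₂ + 2*(L₁*M₂ + M₁*L₂) + 2*K₁*M₂*Real.pi := by ring


lemma schwartz_sup (φ : SchwartzMap ℝ ℂ) : ∃ M : ℝ, 0 ≤ M ∧ ∀ x, ‖φ x‖ ≤ M := by
  obtain ⟨M, hM, h⟩ := φ.decay 0 0
  exact ⟨M, hM.le, fun x => by simpa [norm_iteratedFDeriv_zero] using h x⟩

lemma schwartz_decay1 (φ : SchwartzMap ℝ ℂ) : ∃ K : ℝ, 0 ≤ K ∧ ∀ x, |x| * ‖φ x‖ ≤ K := by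
  obtain ⟨K, hK, h⟩ := φ.decay 1 0
  exact ⟨K, hK.le, fun x => by simpa [norm_iteratedFDeriv_zero, Real.norm_eq_abs] using h x⟩

lemma schwartz_decay2 (φ : SchwartzMap ℝ ℂ) : ∃ K : ℝ, 0 ≤ K ∧ ∀ x, x ^ 2 * ‖φ x‖ ≤ K := by
  obtain ⟨K, hK, h⟩ := φ.decay 2 0
  refine ⟨K, hK.le, fun x => ?_⟩
  have := h x
  rw [norm_iteratedFDeriv_zero, Real.norm_eq_abs] at this
  simpa [sq_abs] using this

lemma schwartz_lip (φ : SchwartzMap ℝ ℂ) : ∃ L : ℝ, 0 ≤ L ∧ ∀ x, ‖φ x - φ 0‖ ≤ L * |x| := by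
  obtain ⟨L, hL, h⟩ := φ.decay 0 1
  have hfd : ∀ x : ℝ, ‖fderiv ℝ φ x‖ ≤ L := by
    intro x
    have := h x
    rw [pow_zero, one_mul] at this
    rwa [← norm_iteratedFDeriv_zero (𝕜 := ℝ) (f := fderiv ℝ φ) (x := x), norm_iteratedFDeriv_fderiv]
  refine ⟨L, hL.le, fun x => ?_⟩
  have := convex_univ.norm_image_sub_le_of_norm_fderiv_le
    (f := fun y => φ y) (fun y _ => (φ.differentiable).differentiableAt) (fun y _ => hfd y)
    (Set.mem_univ (0:ℝ)) (Set.mem_univ x)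
  simpa [Real.norm_eq_abs] using this

end Aux

/-- Logarithmic singularity of the orbital integral at `ξ = 0`: for product Schwartz data,
`f(ξ)/(-ln|ξ|) → 2 φ₁(0) φ₂(0)` as `ξ → 0`, `ξ ≠ 0`. -/
theorem stmt_13 (φ₁ φ₂ : SchwartzMap ℝ ℂ) :
    Tendsto
      (fun ξ : ℝ =>
        (∫ t : ℝ, (|t|⁻¹ : ℝ) • (φ₁ t * φ₂ (ξ / t))) / ((-(Real.log |ξ|) : ℝ) : ℂ))
      (nhdsWithin 0 {(0 : ℝ)}ᶜ)
      (nhds (2 * φ₁ 0 * φ₂ 0)) := by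
  obtain ⟨M₁, hM₁0, hM₁⟩ := schwartz_sup φ₁
  obtain ⟨M₂, hM₂0, hM₂⟩ := schwartz_sup φ₂
  obtain ⟨K₁, hK₁0, hK₁⟩ := schwartz_decay2 φ₁
  obtain ⟨K₂, hK₂0, hK₂⟩ := schwartz_decay1 φ₂
  obtain ⟨L₁, hL₁0, hL₁⟩ := schwartz_lip φ₁
  obtain ⟨L₂, hL₂0, hL₂⟩ := schwartz_lip φ₂
  set C₀ : ℝ := 2*M₁*K₂ + 2*(L₁*M₂ + M₁*L₂) + 2*K₁*M₂*Real.pi with hC₀def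
  have hC₀ : 0 ≤ C₀ := by
    have := Real.pi_nonneg
    positivity
  -- the denominator tends to atTop
  have habs : Tendsto (fun ξ : ℝ => |ξ|) (nhdsWithin (0:ℝ) {(0:ℝ)}ᶜ)
      (nhdsWithin 0 (Set.Ioi 0)) := by
    apply tendsto_nhdsWithin_of_tendsto_nhds_of_eventually_within
    · exact (continuous_abs.tendsto' 0 0 abs_zero).mono_left nhdsWithin_le_nhds
    · exact eventually_mem_nhdsWithin.mono (fun x hx => abs_pos.mpr hx)
  have hL : Tendsto (fun ξ : ℝ => -Real.log |ξ|) (nhdsWithin (0:ℝ) {(0:ℝ)}ᶜ) atTop := by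
    have hlog : Tendsto Real.log (nhdsWithin 0 (Set.Ioi 0)) atBot :=
      Real.tendsto_log_nhdsGT_zero
    exact tendsto_neg_atBot_atTop.comp (hlog.comp habs)
  have hq : Tendsto (fun ξ : ℝ => C₀ / (-Real.log |ξ|)) (nhdsWithin (0:ℝ) {(0:ℝ)}ᶜ) (nhds 0) :=
    Tendsto.div_atTop tendsto_const_nhds hL
  have hev : ∀ᶠ ξ : ℝ in nhdsWithin (0:ℝ) {(0:ℝ)}ᶜ, ξ ≠ 0 ∧ |ξ| < 1 := by
    have h1 : ∀ᶠ ξ : ℝ in nhds (0:ℝ), |ξ| < 1 := by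
      have := Metric.ball_mem_nhds (0:ℝ) one_pos
      filter_upwards [this] with ξ hξ
      simpa [Real.dist_eq] using hξ
    exact (eventually_mem_nhdsWithin.mono fun x hx => hx).and (h1.filter_mono nhdsWithin_le_nhds)
  rw [tendsto_iff_norm_sub_tendsto_zero]
  apply squeeze_zero' (Filter.Eventually.of_forall fun ξ => norm_nonneg _) _ hq
  filter_upwards [hev] with ξ ⟨hξ0, hξ1⟩
  have hξpos : 0 < |ξ| := abs_pos.mpr hξ0
  have hLpos : 0 < -Real.log |ξ| := by
    have := Real.log_neg hξpos hξ1
    linarith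
  have hkey := key_bound φ₁ φ₂ hM₁0 hM₂0 hK₁0 hK₂0 hL₁0 hL₂0 hM₁ hM₂ hK₁ hK₂ hL₁ hL₂ hξ0 hξ1
  have hrw : (∫ t : ℝ, (|t|⁻¹ : ℝ) • (φ₁ t * φ₂ (ξ / t))) / ((-(Real.log |ξ|) : ℝ) : ℂ)
      - 2 * φ₁ 0 * φ₂ 0
      = ((∫ t : ℝ, (|t|⁻¹ : ℝ) • (φ₁ t * φ₂ (ξ / t))) -
          ((-2 * Real.log |ξ|) : ℝ) • (φ₁ 0 * φ₂ 0)) / ((-(Real.log |ξ|) : ℝ) : ℂ) := by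
    have hne : ((-(Real.log |ξ|) : ℝ) : ℂ) ≠ 0 := by
      simpa using hLpos.ne'
    rw [Complex.real_smul, eq_div_iff hne, sub_mul, div_mul_cancel₀ _ hne]
    have hm : ((-2 * Real.log |ξ| : ℝ) : ℂ) = 2 * ((-(Real.log |ξ|) : ℝ) : ℂ) := by
      push_cast
      ring
    rw [hm]
    ring
  rw [hrw, norm_div]
  have hnd : ‖((-(Real.log |ξ|) : ℝ) : ℂ)‖ = -Real.log |ξ| := by
    rw [Complex.norm_real, Real.norm_eq_abs, abs_of_pos hLpos]
  rw [hnd]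
  exact (div_le_div_iff_of_pos_right hLpos).mpr hkey
end

section
/- Let F be a nonarchimedean local field with vol(𝔬)=1, ψ an additive character of conductor 𝔬, q the residue cardinality, and for m ∈ ℕ let O_ξ(m) = 1_{|ξ| = q^{-m}} − 1_{m ≥ 1} 1_{|ξ| = q^{2−m}} + 1_{m = 0} 1_{|ξ| > 1} ∫_{|x|² = |ξ|} ψ(x − ξ x⁻¹) dx be the Kuznetsov orbital integral of the m-th characteristic section. Then for m ≥ 1 the i-th term 1_{|ξ| = q^{2i−m}} ∫_{𝔭^{-i}∖𝔭^{-i+1}} ψ(ξ x⁻¹ − x) dx of the function ξ ↦ ∑_{i≥1} 1_{|ξ| = q^{2i−m}} ∫_{𝔭^{-i}∖𝔭^{-i+1}} ψ(ξ x⁻¹ − x) dx vanishes for i > 1 and equals −1 for i = 1 (i.e. when |ξ| = q^{2−m}). -/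
open MeasureTheory

/-- Rotation trick: if `s` is invariant under a measure-preserving map `T` and a measurable
function `g` satisfies `g ∘ T = c • g` a.e. on `s` with `c ≠ 1`, then `∫_s g = 0`. -/
private lemma key_rot {F : Type*} [MeasurableSpace F] (μ : Measure F) (s : Set F)
    (hs : MeasurableSet s) (T : F → F)
    (hT : ∀ A : Set F, MeasurableSet A → μ (T ⁻¹' A) = μ A)
    (hTs : T ⁻¹' s = s) (g : F → ℂ) (hg : Measurable g) (c : ℂ) (hc : c ≠ 1)
    (hgc : ∀ᵐ x ∂(μ.restrict s), g (T x) = c * g x) :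
    ∫ x in s, g x ∂μ = 0 := by
  set ν := Measure.map g (μ.restrict s) with hν
  have hnull : μ ({x | ¬ g (T x) = c * g x} ∩ s) = 0 := by
    have h := ae_iff.mp hgc
    rwa [Measure.restrict_apply' hs] at h
  have hmap : Measure.map (fun z : ℂ => c * z) ν = ν := by
    ext A hA
    rw [Measure.map_apply (measurable_const_mul c) hA, hν,
      Measure.map_apply hg (hA.preimage (measurable_const_mul c)),
      Measure.map_apply hg hA, Measure.restrict_apply' hs, Measure.restrict_apply' hs]
    have hEq : ((g ⁻¹' ((fun z : ℂ => c * z) ⁻¹' A) ∩ s : Set F))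
        =ᶠ[ae μ] ((T ⁻¹' (g ⁻¹' A ∩ s) : Set F)) := by
      rw [ae_eq_set]
      constructor
      · refine measure_mono_null ?_ hnull
        rintro x ⟨⟨hx1, hx2⟩, hx3⟩
        have hTx : T x ∈ s := by
          have hx' : x ∈ T ⁻¹' s := by rw [hTs]; exact hx2
          exact hx'
        refine ⟨fun h => hx3 ?_, hx2⟩
        exact ⟨show g (T x) ∈ A by rw [h]; exact hx1, hTx⟩
      · refine measure_mono_null ?_ hnull
        rintro x ⟨hx2, hx3⟩
        obtain ⟨hA1, hA2⟩ := hx2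
        have hxs : x ∈ s := by rw [← hTs]; exact hA2
        refine ⟨fun h => hx3 ?_, hxs⟩
        exact ⟨show c * g x ∈ A by rw [← h]; exact hA1, hxs⟩
    rw [measure_congr hEq, hT _ ((hg hA).inter hs)]
  have hI1 : ∫ x in s, g x ∂μ = ∫ z, z ∂ν :=
    (integral_map hg.aemeasurable measurable_id.aestronglyMeasurable).symm
  have hI2 : ∫ z, z ∂ν = c * ∫ z, z ∂ν := by
    conv_lhs => rw [← hmap]
    rw [integral_map (measurable_const_mul c).aemeasurable
      (by rw [hmap]; exact measurable_id.aestronglyMeasurable)]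
    exact integral_const_mul c _
  have h0 : (1 - c) * ∫ z, z ∂ν = 0 := by
    rw [sub_mul, one_mul]
    rw [← hI2]
    ring
  rcases mul_eq_zero.mp h0 with h | h
  · exact absurd (by linear_combination -h : c = 1) hc
  · rw [hI1, h]

/-- Kuznetsov orbital integrals of characteristic sections: for `m ≥ 1`, `|ξ| = q^{2i-m}`,
the stratum integral `∫_{𝔭^{-i}∖𝔭^{-i+1}} ψ(ξx⁻¹ - x) dx` vanishes for `i > 1` and
equals `-1` for `i = 1`. -/
theorem stmt_17 {F : Type*} [Field F] [MeasurableSpace F]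
    (μ : Measure F) (abs : F → ℝ) (q : ℝ) (ψ : F → ℂ)
    (hq : 1 < q)
    (habs_meas : Measurable abs)
    (habs_nonneg : ∀ x, 0 ≤ abs x)
    (habs_eq_zero : ∀ x, abs x = 0 ↔ x = 0)
    (habs_mul : ∀ x y, abs (x * y) = abs x * abs y)
    (habs_add : ∀ x y, abs (x + y) ≤ max (abs x) (abs y))
    (habs_vals : ∀ x : F, x ≠ 0 → ∃ n : ℤ, abs x = q ^ n)
    (hμ_inv : ∀ (a : F) (s : Set F), MeasurableSet s → μ ((fun x => a + x) ⁻¹' s) = μ s)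
    (hμ_fin : ∀ n : ℤ, μ {x : F | abs x ≤ q ^ n} < ⊤)
    (hμ_int : μ {x : F | abs x ≤ 1} = 1)
    (hψ_meas : Measurable ψ)
    (hψ_add : ∀ x y, ψ (x + y) = ψ x * ψ y)
    (hψ_triv : ∀ x, abs x ≤ 1 → ψ x = 1)
    (hψ_nontriv : ∃ x, abs x ≤ q ∧ ψ x ≠ 1)
    (m i : ℕ) (hm : 1 ≤ m) (hi : 1 ≤ i)
    (ξ : F) (hξ : abs ξ = q ^ (2 * (i : ℤ) - (m : ℤ))) :
    (1 < i → ∫ x in {x : F | abs x = q ^ (i : ℤ)}, ψ (ξ * x⁻¹ - x) ∂μ = 0) ∧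
    (i = 1 → ∫ x in {x : F | abs x = q ^ (1 : ℤ)}, ψ (ξ * x⁻¹ - x) ∂μ = -1) := by
  have hq0 : (0:ℝ) < q := lt_trans one_pos hq
  -- basic facts about abs
  have habs1 : abs 1 = 1 := by
    have h := habs_mul 1 1
    rw [mul_one] at h
    have h1 : abs 1 ≠ 0 := fun h0 => one_ne_zero ((habs_eq_zero 1).mp h0)
    exact (mul_left_cancel₀ h1 (by rw [mul_one, ← h])).symm
  have habs_negone : abs (-1 : F) = 1 := by
    have h := habs_mul (-1 : F) (-1)
    rw [neg_mul_neg, one_mul, habs1] at h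
    rcases mul_self_eq_one_iff.mp h.symm with h' | h'
    · exact h'
    · linarith [habs_nonneg (-1 : F)]
  have habs_neg : ∀ x : F, abs (-x) = abs x := fun x => by
    rw [show (-x : F) = (-1) * x by ring, habs_mul, habs_negone, one_mul]
  have habs_ne : ∀ x : F, x ≠ 0 → abs x ≠ 0 := fun x hx h => hx ((habs_eq_zero x).mp h)
  have habs_inv : ∀ x : F, x ≠ 0 → abs x⁻¹ = (abs x)⁻¹ := by
    intro x hx
    have h := habs_mul x x⁻¹
    rw [mul_inv_cancel₀ hx, habs1] at h
    exact eq_inv_of_mul_eq_one_right h.symm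
  have hult : ∀ a b : F, abs a < abs b → abs (a + b) = abs b := by
    intro a b h
    have h1 : abs (a + b) ≤ abs b := le_trans (habs_add a b) (by rw [max_eq_right h.le])
    have h2 : abs b ≤ max (abs (a + b)) (abs a) := by
      have h3 := habs_add (a + b) (-a)
      rw [show a + b + -a = b by ring, habs_neg] at h3
      exact h3
    rcases le_max_iff.mp h2 with h3 | h3
    · linarith
    · linarith
  -- basic facts about ψ
  have hψ0 : ψ 0 = 1 := hψ_triv 0 (by rw [(habs_eq_zero 0).mpr rfl]; linarith)
  have hψ_ne : ∀ x, ψ x ≠ 0 := by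
    intro x h
    have h2 := hψ_add x (-x)
    rw [add_neg_cancel, hψ0, h, zero_mul] at h2
    exact one_ne_zero h2
  have hψ_neg : ∀ x, ψ (-x) = (ψ x)⁻¹ := by
    intro x
    have h2 := hψ_add x (-x)
    rw [add_neg_cancel, hψ0] at h2
    exact eq_inv_of_mul_eq_one_right h2.symm
  -- the nontrivial character point
  obtain ⟨u, hu_le, hu_ne⟩ := hψ_nontriv
  set c : ℂ := ψ u with hc_def
  have hc_ne0 : c ≠ 0 := hψ_ne u
  have hcinv_ne : c⁻¹ ≠ 1 := fun h => hu_ne (inv_eq_one.mp h)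
  -- measurable sets
  have hB1m : MeasurableSet {x : F | abs x ≤ 1} := habs_meas measurableSet_Iic
  have hBqm : MeasurableSet {x : F | abs x ≤ q} := habs_meas measurableSet_Iic
  have hSm : ∀ r : ℝ, MeasurableSet {x : F | abs x = r} :=
    fun r => habs_meas (measurableSet_singleton r)
  have hBq_fin : μ {x : F | abs x ≤ q} < ⊤ := by
    have h := hμ_fin 1
    rwa [zpow_one] at h
  -- translation stability of the ball of radius q
  have habs_add_iff : ∀ v x : F, abs v ≤ q → (abs (v + x) ≤ q ↔ abs x ≤ q) := by
    intro v x hv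
    constructor
    · intro h
      have h3 := habs_add (-v) (v + x)
      rw [show -v + (v + x) = x by ring, habs_neg] at h3
      exact le_trans h3 (max_le hv h)
    · intro h
      exact le_trans (habs_add v x) (max_le hv h)
  -- THE NORM LEMMA : ‖ψ x‖ = 1 on the ball of radius q
  have hnorm : ∀ x : F, abs x ≤ q → ‖ψ x‖ = 1 := by
    by_contra hcon
    push_neg at hcon
    obtain ⟨x₁, hx₁q, hx₁ne⟩ := hcon
    have hx₁pos : 0 < ‖ψ x₁‖ := norm_pos_iff.mpr (hψ_ne x₁)
    -- get a point with norm > 1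
    obtain ⟨x₀, hx₀q, hr⟩ : ∃ x₀ : F, abs x₀ ≤ q ∧ 1 < ‖ψ x₀‖ := by
      rcases lt_or_gt_of_ne hx₁ne with hlt | hgt
      · refine ⟨-x₁, by rw [habs_neg]; exact hx₁q, ?_⟩
        rw [hψ_neg, norm_inv]
        exact (one_lt_inv₀ hx₁pos).mpr hlt
      · exact ⟨x₁, hx₁q, hgt⟩
    set r : ℝ := ‖ψ x₀‖ with hr_def
    have hr0 : 0 < r := lt_trans one_pos hr
    set A : ℤ → Set F := fun n =>
      {y : F | abs y ≤ q ∧ ‖ψ y‖ ∈ Set.Ico (r ^ n) (r ^ (n + 1))} with hA_def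
    have hAm : ∀ n : ℤ, MeasurableSet (A n) := by
      intro n
      exact (habs_meas measurableSet_Iic).inter (hψ_meas.norm measurableSet_Ico)
    have hdisj : Pairwise (Function.onFun Disjoint A) := by
      intro a b hab
      rw [Function.onFun, Set.disjoint_left]
      rintro y ⟨_, hy1, hy2⟩ ⟨_, hy3, hy4⟩
      rcases lt_or_gt_of_ne hab with h | h
      · have : r ^ (a + 1) ≤ r ^ b := zpow_le_zpow_right₀ hr.le (by omega)
        linarith
      · have : r ^ (b + 1) ≤ r ^ a := zpow_le_zpow_right₀ hr.le (by omega)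
        linarith
    have hstep : ∀ n : ℤ, μ (A n) = μ (A (n + 1)) := by
      intro n
      have hpre : ((fun x => x₀ + x) ⁻¹' A (n + 1)) = A n := by
        ext y
        have e1 : r ^ (n + 1) = r * r ^ n := by rw [zpow_add_one₀ (ne_of_gt hr0), mul_comm]
        have e2 : r ^ (n + 1 + 1) = r * r ^ (n + 1) := by
          rw [zpow_add_one₀ (ne_of_gt hr0), mul_comm]
        simp only [Set.mem_preimage, hA_def, Set.mem_setOf_eq, Set.mem_Ico]
        rw [hψ_add, norm_mul, ← hr_def, habs_add_iff x₀ y hx₀q, e1, e2,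
          mul_le_mul_iff_right₀ hr0, mul_lt_mul_iff_right₀ hr0, e1]
      rw [← hpre, hμ_inv x₀ (A (n + 1)) (hAm (n + 1))]
    have hall : ∀ n : ℤ, μ (A n) = μ (A 0) := by
      intro n
      induction n using Int.induction_on with
      | zero => rfl
      | succ k ih => rw [← hstep k]; exact ih
      | pred k ih =>
        rw [show (-(k : ℤ) - 1 : ℤ) = (-(k : ℤ) - 1) by rfl]
        have := hstep (-(k : ℤ) - 1)
        rw [show (-(k : ℤ) - 1 + 1 : ℤ) = -(k : ℤ) by ring] at this
        rw [this]; exact ih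
    have hcover : {x : F | abs x ≤ 1} ⊆ ⋃ n : ℤ, A n := by
      intro y hy
      have h0 : 0 < ‖ψ y‖ := norm_pos_iff.mpr (hψ_ne y)
      obtain ⟨n, hn⟩ := exists_mem_Ico_zpow h0 hr
      exact Set.mem_iUnion.mpr ⟨n, ⟨le_trans hy hq.le, hn⟩⟩
    have hsub : (⋃ n : ℤ, A n) ⊆ {x : F | abs x ≤ q} := by
      intro y hy
      obtain ⟨n, hn⟩ := Set.mem_iUnion.mp hy
      exact hn.1
    have hU : μ (⋃ n : ℤ, A n) = ∑' n : ℤ, μ (A n) := measure_iUnion hdisj hAm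
    by_cases h0 : μ (A 0) = 0
    · have : μ (⋃ n : ℤ, A n) = 0 := by
        rw [hU, tsum_congr (fun n => (hall n).trans h0)]
        simp
      have h1 : (1 : ENNReal) ≤ 0 := by
        calc (1 : ENNReal) = μ {x : F | abs x ≤ 1} := hμ_int.symm
        _ ≤ μ (⋃ n : ℤ, A n) := measure_mono hcover
        _ = 0 := this
      simp at h1
    · have htop : μ (⋃ n : ℤ, A n) = ⊤ := by
        rw [hU, tsum_congr (fun n => hall n)]
        exact ENNReal.tsum_const_eq_top_of_ne_zero h0
      have := lt_of_le_of_lt (measure_mono hsub) hBq_fin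
      rw [htop] at this
      exact absurd this (lt_irrefl ⊤)
  constructor
  · -- case i > 1 : integral vanishes
    intro hi2
    set Si : Set F := {x : F | abs x = q ^ (i : ℤ)} with hSi_def
    have hSim : MeasurableSet Si := hSm _
    have hqi : q < q ^ (i : ℤ) := by
      calc q = q ^ (1 : ℤ) := (zpow_one q).symm
      _ < q ^ (i : ℤ) := zpow_lt_zpow_right₀ hq (by exact_mod_cast hi2)
    have hmem_add : ∀ x : F, x ∈ Si → u + x ∈ Si := by
      intro x hx
      have : abs u < abs x := lt_of_le_of_lt hu_le (by rw [hx]; exact hqi)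
      show abs (u + x) = q ^ (i : ℤ)
      rw [hult u x this]; exact hx
    have hstable : (fun x => u + x) ⁻¹' Si = Si := by
      ext x
      simp only [Set.mem_preimage]
      constructor
      · intro h
        have hux : abs (u + x) = q ^ (i : ℤ) := h
        have habsu : abs (-u) < abs (u + x) := by
          rw [habs_neg, hux]; exact lt_of_le_of_lt hu_le hqi
        show abs x = q ^ (i : ℤ)
        rw [show x = -u + (u + x) by ring, hult (-u) (u + x) habsu]
        exact hux
      · exact hmem_add x
    -- pointwise transformation rule
    set g : F → ℂ := fun x => ψ (ξ * x⁻¹ - x) with hg_def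
    have hpt : ∀ x ∈ Si, g (u + x) = c⁻¹ * g x := by
      intro x hx
      have hxval : abs x = q ^ (i : ℤ) := hx
      have hx0 : x ≠ 0 := by
        intro h
        rw [h, (habs_eq_zero (0 : F)).mpr rfl] at hxval
        exact absurd hxval.symm (ne_of_gt (zpow_pos hq0 _))
      have huxval : abs (u + x) = q ^ (i : ℤ) := hmem_add x hx
      have hux0 : u + x ≠ 0 := by
        intro h
        rw [h, (habs_eq_zero (0 : F)).mpr rfl] at huxval
        exact absurd huxval.symm (ne_of_gt (zpow_pos hq0 _))
      set d : F := ξ * (u + x)⁻¹ - ξ * x⁻¹ with hd_def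
      have hd_eq : d = ξ * (-u) * (x⁻¹ * (u + x)⁻¹) := by
        rw [hd_def]
        have h1 := mul_inv_cancel₀ hx0
        have h2 := mul_inv_cancel₀ hux0
        linear_combination (ξ * x⁻¹) * h2 - (ξ * (u + x)⁻¹) * h1
      have habs_d : abs d ≤ 1 := by
        rw [hd_eq, habs_mul, habs_mul, habs_mul, habs_neg, habs_inv x hx0,
          habs_inv (u + x) hux0, hxval, huxval, hξ, ← zpow_neg]
        have key : q ^ (2 * (i : ℤ) - (m : ℤ)) * (q ^ (-(i : ℤ)) * q ^ (-(i : ℤ)))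
            = q ^ (-(m : ℤ)) := by
          rw [← zpow_add₀ (ne_of_gt hq0), ← zpow_add₀ (ne_of_gt hq0)]
          congr 1
          ring
        calc q ^ (2 * (i : ℤ) - (m : ℤ)) * abs u * (q ^ (-(i : ℤ)) * q ^ (-(i : ℤ)))
            = q ^ (-(m : ℤ)) * abs u := by rw [← key]; ring
        _ ≤ q ^ (-(m : ℤ)) * q := by
            exact mul_le_mul_of_nonneg_left hu_le (le_of_lt (zpow_pos hq0 _))
        _ = q ^ (1 - (m : ℤ)) := by
            rw [show (1 - (m : ℤ)) = -(m : ℤ) + 1 by ring, zpow_add₀ (ne_of_gt hq0), zpow_one]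
        _ ≤ q ^ (0 : ℤ) := zpow_le_zpow_right₀ hq.le (by
            have : (1 : ℤ) ≤ (m : ℤ) := by exact_mod_cast hm
            omega)
        _ = 1 := zpow_zero q
      have hψd : ψ d = 1 := hψ_triv d habs_d
      have harg : ξ * (u + x)⁻¹ - (u + x) = d + (ξ * x⁻¹ - x) + (-u) := by
        rw [hd_def]; ring
      show ψ (ξ * (u + x)⁻¹ - (u + x)) = c⁻¹ * ψ (ξ * x⁻¹ - x)
      rw [harg, hψ_add, hψ_add, hψd, one_mul, hψ_neg, hc_def]
      ring
    -- integral vanishes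
    by_cases hsm : AEStronglyMeasurable g (μ.restrict Si)
    · set g' : F → ℂ := hsm.mk g with hg'_def
      have hg'sm : StronglyMeasurable g' := hsm.stronglyMeasurable_mk
      have heq : g =ᶠ[ae (μ.restrict Si)] g' := hsm.ae_eq_mk
      have hnull' : μ ({x : F | ¬ g x = g' x} ∩ Si) = 0 := by
        have h := ae_iff.mp heq
        rwa [Measure.restrict_apply' hSim] at h
      have hTf : ∀ᵐ x ∂(μ.restrict Si), g (u + x) = g' (u + x) := by
        rw [ae_iff, Measure.restrict_apply' hSim]
        have hsub2 : {x : F | ¬ g (u + x) = g' (u + x)} ∩ Si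
            ⊆ (fun x => u + x) ⁻¹' (toMeasurable μ ({x : F | ¬ g x = g' x} ∩ Si)) := by
          rintro x ⟨hx1, hx2⟩
          have hTx : u + x ∈ Si := hmem_add x hx2
          exact subset_toMeasurable μ _ ⟨hx1, hTx⟩
        refine measure_mono_null hsub2 ?_
        rw [hμ_inv u _ (measurableSet_toMeasurable μ _), measure_toMeasurable]
        exact hnull'
      have hgc : ∀ᵐ x ∂(μ.restrict Si), g' (u + x) = c⁻¹ * g' x := by
        filter_upwards [heq, hTf, ae_restrict_mem hSim] with x h1 h2 h3
        rw [← h2, hpt x h3, h1]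
      rw [show (∫ x in Si, ψ (ξ * x⁻¹ - x) ∂μ) = ∫ x in Si, g x ∂μ from rfl,
        integral_congr_ae heq]
      exact key_rot μ Si hSim (fun x => u + x) (hμ_inv u) hstable g'
        hg'sm.measurable c⁻¹ hcinv_ne hgc
    · exact integral_non_aestronglyMeasurable hsm
  · -- case i = 1 : integral is -1
    intro hi1
    subst hi1
    have hm' : (1 : ℤ) ≤ (m : ℤ) := by exact_mod_cast hm
    have hξ_le : abs ξ ≤ q := by
      rw [hξ]
      calc q ^ (2 * (1 : ℤ) - (m : ℤ)) ≤ q ^ (1 : ℤ) :=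
        zpow_le_zpow_right₀ hq.le (by omega)
      _ = q := zpow_one q
    set S1 : Set F := {x : F | abs x = q ^ (1 : ℤ)} with hS1_def
    have hS1m : MeasurableSet S1 := hSm _
    set h : F → ℂ := fun x => (ψ x)⁻¹ with hh_def
    have hh_meas : Measurable h := hψ_meas.inv
    -- pointwise identification on S1
    have hpt : Set.EqOn (fun x => ψ (ξ * x⁻¹ - x)) h S1 := by
      intro x hx
      have hxval : abs x = q := by
        have : abs x = q ^ (1 : ℤ) := hx
        rwa [zpow_one] at this
      have hx0 : x ≠ 0 := by
        intro h'
        rw [h', (habs_eq_zero (0 : F)).mpr rfl] at hxval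
        linarith
      have h1 : abs (ξ * x⁻¹) ≤ 1 := by
        rw [habs_mul, habs_inv x hx0, hxval]
        have h2 : abs ξ * q⁻¹ ≤ q * q⁻¹ :=
          mul_le_mul_of_nonneg_right hξ_le (inv_nonneg.mpr hq0.le)
        rwa [mul_inv_cancel₀ (ne_of_gt hq0)] at h2
      show ψ (ξ * x⁻¹ - x) = (ψ x)⁻¹
      rw [sub_eq_add_neg, hψ_add, hψ_triv _ h1, one_mul, hψ_neg]
    rw [setIntegral_congr_fun hS1m hpt]
    -- decomposition of the ball of radius q
    have hBq_eq : {x : F | abs x ≤ q} = {x : F | abs x ≤ 1} ∪ S1 := by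
      ext x
      simp only [Set.mem_union, Set.mem_setOf_eq, hS1_def]
      constructor
      · intro hx
        by_cases h1 : abs x ≤ 1
        · exact Or.inl h1
        · right
          have hx0 : x ≠ 0 := by
            intro h'
            rw [h', (habs_eq_zero (0 : F)).mpr rfl] at h1
            exact h1 (by linarith)
          obtain ⟨n, hn⟩ := habs_vals x hx0
          have hn1 : q ^ n ≤ q ^ (1 : ℤ) := by rw [← hn, zpow_one]; exact hx
          have hn2 : q ^ (0 : ℤ) < q ^ n := by
            rw [zpow_zero, ← hn]
            exact lt_of_not_ge h1
          have : n = 1 := by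
            have ha := (zpow_le_zpow_iff_right₀ hq).mp hn1
            have hb := (zpow_lt_zpow_iff_right₀ hq).mp hn2
            omega
          rw [hn, this]
      · intro hx
        rcases hx with hx | hx
        · linarith
        · rw [hx, zpow_one]
    have hdisj : Disjoint {x : F | abs x ≤ 1} S1 := by
      rw [Set.disjoint_left]
      intro x hx1 hx2
      have : abs x = q := by
        have h' : abs x = q ^ (1 : ℤ) := hx2
        rwa [zpow_one] at h'
      have hx1' : abs x ≤ 1 := hx1
      linarith
    -- integrability
    have hS1_fin : μ S1 ≠ ⊤ := by
      refine ne_of_lt (lt_of_le_of_lt (measure_mono ?_) hBq_fin)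
      intro x hx
      show abs x ≤ q
      rw [show abs x = q ^ (1 : ℤ) from hx, zpow_one]
    have hIntS1 : IntegrableOn h S1 μ := by
      refine Measure.integrableOn_of_bounded hS1_fin hh_meas.aestronglyMeasurable
        (M := 1) ?_
      filter_upwards [ae_restrict_mem hS1m] with x hx
      have hxval : abs x = q := by rw [show abs x = q ^ (1:ℤ) from hx, zpow_one] -- bad
      rw [hh_def]
      simp only [norm_inv]
      rw [hnorm x (le_of_eq hxval)]
      norm_num
    have hIntB1 : IntegrableOn h {x : F | abs x ≤ 1} μ := by
      have hc1 : IntegrableOn (fun _ : F => (1 : ℂ)) {x : F | abs x ≤ 1} μ :=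
        integrableOn_const (by rw [hμ_int]; exact ENNReal.one_ne_top)
      refine hc1.congr_fun ?_ hB1m
      intro x hx
      show (1 : ℂ) = h x
      rw [hh_def]
      simp only
      rw [hψ_triv x hx, inv_one]
    have hsplit := setIntegral_union hdisj hS1m hIntB1 hIntS1
    rw [← hBq_eq] at hsplit
    -- the ball integral vanishes
    have hBq_int : ∫ x in {x : F | abs x ≤ q}, h x ∂μ = 0 := by
      refine key_rot μ {x : F | abs x ≤ q} hBqm (fun x => u + x) (hμ_inv u) ?_ h
        hh_meas c⁻¹ hcinv_ne (ae_of_all _ ?_)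
      · ext x
        simp only [Set.mem_preimage, Set.mem_setOf_eq]
        exact habs_add_iff u x hu_le
      · intro x
        show (ψ (u + x))⁻¹ = c⁻¹ * (ψ x)⁻¹
        rw [hψ_add, mul_inv, hc_def]
    -- the unit ball integral is 1
    have hB1_int : ∫ x in {x : F | abs x ≤ 1}, h x ∂μ = 1 := by
      rw [setIntegral_congr_fun hB1m (g := fun _ => (1 : ℂ))
        (fun x hx => by show h x = 1; rw [hh_def]; simp only; rw [hψ_triv x hx, inv_one]),
        setIntegral_const, measureReal_def, hμ_int]
      simp
    rw [hBq_int, hB1_int] at hsplit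
    linear_combination -hsplit
end

section
/- Let q > 1, ε ∈ {±1}, s ∈ ℂ with Re(s) > −1/2. The formal Hecke series product (∑_{m≥0} q^{-m(s+1/2)} t^m) · (∑_{n≥0} q^{-n(s+1/2)} ε^n t^n) in the polynomial algebra ℂ[t] graded with multiplication rule t^m · t^n = ∑_{l=0}^{min(m,n)} t^{m+n−2l} (the Clebsch–Gordan fusion product) equals ∑_{k≥0} a_k t^k with a_k = q^{-k(s+1/2)}/(1 − ε q^{-2s-1}) · c(k), where c(k) = k+1 if ε = 1, c(k) = 1 if ε = −1 and k even, c(k) = 0 if ε = −1 and k odd. -/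
/-!
Put `r = q^{-(s+1/2)}`, so that `‖r‖ < 1` and the term `t^m · t^n` of the product carries the
weight `r^(m+n) ε^n`. The summands of `t^m ⊗ t^n` containing `t^k` are indexed by
`m = l + (k - j)`, `n = l + j` with `l ≥ 0` and `j ≤ k`, and then the weight is
`(ε r²)^l · ε^j r^k`. The coefficient of `t^k` thus factors as the geometric series
`∑ (ε r²)^l = (1 - ε r²)⁻¹` times `r^k ∑_{j ≤ k} ε^j`, and the last sum is `c(k)` for `ε = ±1`.
-/

open Finset

/-- `V_k` occurs in `V_m ⊗ V_n` exactly when `(m, n) = clebschGordanPair k (l, j)`. -/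
def clebschGordanPair (k : ℕ) (x : ℕ × Fin (k + 1)) : ℕ × ℕ :=
  (x.1 + (k - x.2), x.1 + x.2)

theorem clebschGordanPair_injective (k : ℕ) : Function.Injective (clebschGordanPair k) := by
  rintro ⟨l, j⟩ ⟨l', j'⟩ h
  have h₁ : l + (k - j) = l' + (k - j') := congrArg Prod.fst h
  have h₂ : l + j = l' + j' := congrArg Prod.snd h
  have := j.isLt
  have := j'.isLt
  obtain rfl : l = l' := by omega
  obtain rfl : j = j' := Fin.ext (by omega)
  rfl

theorem mem_range_clebschGordanPair_iff {k : ℕ} {p : ℕ × ℕ} :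
    p ∈ Set.range (clebschGordanPair k) ↔
      ∃ l : ℕ, l ≤ min p.1 p.2 ∧ p.1 + p.2 = k + 2 * l := by
  constructor
  · rintro ⟨⟨l, j⟩, rfl⟩
    exact ⟨l, by simp [clebschGordanPair], by simp only [clebschGordanPair]; omega⟩
  · rintro ⟨l, hl, hsum⟩
    have := le_min_iff.mp hl
    exact ⟨(l, ⟨p.2 - l, by omega⟩),
      Prod.ext (by simp only [clebschGordanPair]; omega)
        (by simp only [clebschGordanPair]; omega)⟩

open Classical in
theorem tsum_clebschGordan_coeff {𝕜 : Type*} [NormedField 𝕜] [CompleteSpace 𝕜] {r ε : 𝕜}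
    (h : ‖ε * r ^ 2‖ < 1) (k : ℕ) :
    ∑' p : ℕ × ℕ, (if ∃ l : ℕ, l ≤ min p.1 p.2 ∧ p.1 + p.2 = k + 2 * l then (1 : 𝕜) else 0) *
        (r ^ p.1 * (r ^ p.2 * ε ^ p.2))
      = (1 - ε * r ^ 2)⁻¹ * ((∑ j ∈ range (k + 1), ε ^ j) * r ^ k) := by
  set f : ℕ × ℕ → 𝕜 := fun p =>
    (if ∃ l : ℕ, l ≤ min p.1 p.2 ∧ p.1 + p.2 = k + 2 * l then (1 : 𝕜) else 0) *
      (r ^ p.1 * (r ^ p.2 * ε ^ p.2))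
  have hsupp : Function.support f ⊆ Set.range (clebschGordanPair k) :=
    Function.support_subset_iff'.mpr fun p hp => by
      simp only [f, if_neg (mt mem_range_clebschGordanPair_iff.mpr hp), zero_mul]
  have hweight : ∀ x : ℕ × Fin (k + 1),
      f (clebschGordanPair k x) = (ε * r ^ 2) ^ x.1 * (ε ^ (x.2 : ℕ) * r ^ k) := by
    rintro ⟨l, j⟩
    have hj : (j : ℕ) ≤ k := Nat.le_of_lt_succ j.isLt
    have hmem := mem_range_clebschGordanPair_iff.mp ⟨(l, j), rfl⟩
    dsimp only [f]
    rw [if_pos hmem, one_mul]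
    simp only [clebschGordanPair]
    calc r ^ (l + (k - j)) * (r ^ (l + j) * ε ^ (l + j))
        = ε ^ l * ε ^ (j : ℕ) * r ^ (2 * l + ((k - j) + j)) := by ring
      _ = (ε * r ^ 2) ^ l * (ε ^ (j : ℕ) * r ^ k) := by
        rw [Nat.sub_add_cancel hj]; ring
  have hgeom : Summable fun l : ℕ => ‖(ε * r ^ 2) ^ l‖ := by
    simpa only [norm_pow] using summable_geometric_of_lt_one (norm_nonneg _) h
  rw [← (clebschGordanPair_injective k).tsum_eq hsupp, tsum_congr hweight,
    ← tsum_mul_tsum_of_summable_norm (g := fun j : Fin (k + 1) => ε ^ (j : ℕ) * r ^ k) hgeom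
      Summable.of_finite,
    tsum_geometric_of_norm_lt_one h, tsum_fintype, ← Finset.sum_mul,
    Fin.sum_univ_eq_sum_range (fun j => ε ^ j)]

open Classical in
theorem geom_sum_range_succ_of_eq_one_or_neg_one {R : Type*} [CommRing R] [CharZero R] {ε : R}
    (hε : ε = 1 ∨ ε = -1) (k : ℕ) :
    ∑ j ∈ range (k + 1), ε ^ j = if ε = 1 then (k : R) + 1 else if Even k then 1 else 0 := by
  rcases hε with rfl | rfl
  · simp
  · have hne : (-1 : R) ≠ 1 := fun h => two_ne_zero (α := R) (by linear_combination -h)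
    rw [if_neg hne, neg_one_geom_sum]
    by_cases hk : Even k <;> simp [Nat.even_add_one, hk]

theorem norm_ofReal_cpow_neg_lt_one {q : ℝ} (hq : 1 < q) {z : ℂ} (hz : 0 < z.re) :
    ‖(q : ℂ) ^ (-z)‖ < 1 := by
  rw [Complex.norm_cpow_eq_rpow_re_of_pos (zero_lt_one.trans hq)]
  exact Real.rpow_lt_one_of_one_lt_of_neg hq (by simpa using hz)

open Classical in
/-- The Clebsch–Gordan fusion product of the two Hecke series: the coefficient of `t^k`
(i.e. of `[V_k]`) in
`(∑ q^{-m(s+1/2)} t^m)·(∑ q^{-n(s+1/2)} ε^n t^n)` equals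
`q^{-k(s+1/2)}/(1-εq^{-2s-1})·c(k)`. -/
theorem stmt_18 (q : ℝ) (hq : 1 < q) (s : ℂ) (hs : -1/2 < s.re)
    (ε : ℂ) (hε : ε = 1 ∨ ε = -1) (k : ℕ) :
    (∑' p : ℕ × ℕ,
        (if ∃ l : ℕ, l ≤ min p.1 p.2 ∧ p.1 + p.2 = k + 2 * l then (1 : ℂ) else 0) *
          ((q : ℂ) ^ (-(p.1 : ℂ) * (s + 1/2)) *
            ((q : ℂ) ^ (-(p.2 : ℂ) * (s + 1/2)) * ε ^ p.2)))
      = (q : ℂ) ^ (-(k : ℂ) * (s + 1/2)) / (1 - ε * (q : ℂ) ^ (-2 * s - 1)) *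
        (if ε = 1 then ((k : ℂ) + 1) else if Even k then 1 else 0) := by
  set r : ℂ := (q : ℂ) ^ (-(s + 1/2))
  have hpow : ∀ m : ℕ, (q : ℂ) ^ (-(m : ℂ) * (s + 1/2)) = r ^ m := fun m => by
    rw [neg_mul, ← mul_neg, Complex.cpow_nat_mul]
  have hpow_two : (q : ℂ) ^ (-2 * s - 1) = r ^ 2 := by
    rw [← hpow 2]; push_cast; ring_nf
  have hr : ‖r‖ < 1 :=
    norm_ofReal_cpow_neg_lt_one hq (by simpa using (by linarith : 0 < s.re + 1 / 2))
  have hεr : ‖ε * r ^ 2‖ < 1 := by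
    have hε_norm : ‖ε‖ = 1 := by rcases hε with rfl | rfl <;> simp
    rw [norm_mul, hε_norm, one_mul, norm_pow]
    exact pow_lt_one₀ (norm_nonneg r) hr two_ne_zero
  simp only [hpow, hpow_two]
  rw [tsum_clebschGordan_coeff hεr, geom_sum_range_succ_of_eq_one_or_neg_one hε, div_eq_mul_inv]
  ring
end

section
/- Let ψ be an additive character of a nonarchimedean local field F with conductor 𝔬 and Haar measure with vol(𝔬) = 1. Then the Fourier transform of the function x ↦ ψ(1/x)·1_𝔬(x) (defined for x ∈ 𝔬∖{0}, extended by 0) satisfies, for |ξ| > max(1, q²): 𝓕(ψ(1/·)1_𝔬)(ξ) := ∫_𝔬 ψ(x⁻¹ − ξx) dx = |ξ|⁻¹ ∫_{|x|² = |ξ|} ψ(ξ x⁻¹ − x) dx. -/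
/-!
Write `|ξ| = q ^ m` and split `𝔬 ∖ {0}` into the spheres `|x| = q ^ k`, `k ≤ 0`; the point `0` is
null. On such a sphere the phase `φ x = x⁻¹ - ξ x` has slope `-(ξ + x⁻²)`, of size at most
`q ^ (-j)` with `j = min (-m) (2k)`, and its second-order Taylor remainder lies in `𝔬`. Hence
`ψ ∘ φ` is constant on balls of radius `q ^ j`, and on a ball of radius `q ^ (j + 1)` it is a
constant times an additive character. When `2k ≠ -m` the slope has size exactly `q ^ (-j)`, that
character is nontrivial on the ball, and the integral over every such ball, hence over the sphere,
vanishes. On the remaining sphere `|x|² = |ξ|⁻¹` the substitution `x ↦ ξ x` produces the factor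
`|ξ|⁻¹` and the phase `ξ x⁻¹ - x`.

The σ-algebra of `F` is arbitrary and neither addition nor multiplication is assumed measurable,
so integrals are never transported along maps. All integrands are constant on small balls, and
their integrals are computed as finite sums over partitions into balls, which are then reindexed.
-/

open MeasureTheory Set

namespace AbsoluteValue

variable {F : Type*} [Field F] (v : AbsoluteValue F ℝ)

def closedBall (y : F) (r : ℝ) : Set F := {x | v (x - y) ≤ r}

def sphere (r : ℝ) : Set F := {x | v x = r}

variable {v}

theorem mem_closedBall {x y : F} {r : ℝ} : x ∈ v.closedBall y r ↔ v (x - y) ≤ r := Iff.rfl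

theorem mem_sphere {x : F} {r : ℝ} : x ∈ v.sphere r ↔ v x = r := Iff.rfl

theorem mem_closedBall_comm {x y : F} {r : ℝ} : x ∈ v.closedBall y r ↔ y ∈ v.closedBall x r := by
  rw [mem_closedBall, mem_closedBall, v.map_sub]

theorem closedBall_zero_eq (r : ℝ) : v.closedBall 0 r = {x | v x ≤ r} := by
  simp only [closedBall, sub_zero]

theorem mem_closedBall_self {y : F} {r : ℝ} (hr : 0 ≤ r) : y ∈ v.closedBall y r := by
  rwa [mem_closedBall, sub_self, v.map_zero]

theorem map_sub_le_max (hv : IsNonarchimedean v) (x y : F) : v (x - y) ≤ max (v x) (v y) := by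
  simpa only [sub_eq_add_neg, v.map_neg] using hv x (-y)

theorem closedBall_subset_closedBall (hv : IsNonarchimedean v) {x y : F} {r R : ℝ}
    (hx : x ∈ v.closedBall y R) (hrR : r ≤ R) : v.closedBall x r ⊆ v.closedBall y R := by
  intro z hz
  rw [mem_closedBall, ← sub_add_sub_cancel z x y]
  exact (hv _ _).trans (max_le (hz.trans hrR) hx)

theorem closedBall_eq_of_mem (hv : IsNonarchimedean v) {x y : F} {r : ℝ}
    (hx : x ∈ v.closedBall y r) : v.closedBall x r = v.closedBall y r :=
  (closedBall_subset_closedBall hv hx le_rfl).antisymm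
    (closedBall_subset_closedBall hv (mem_closedBall_comm.1 hx) le_rfl)

theorem disjoint_closedBall_of_ne (hv : IsNonarchimedean v) {x y : F} {r : ℝ}
    (h : v.closedBall x r ≠ v.closedBall y r) : Disjoint (v.closedBall x r) (v.closedBall y r) :=
  Set.disjoint_left.2 fun _ hx hy =>
    h ((closedBall_eq_of_mem hv hx).symm.trans (closedBall_eq_of_mem hv hy))

theorem closedBall_subset_sphere (hv : IsNonarchimedean v) {x : F} {r s : ℝ}
    (hx : x ∈ v.sphere s) (hrs : r < s) : v.closedBall x r ⊆ v.sphere s := by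
  intro y hy
  rw [mem_sphere, ← add_sub_cancel x y, hv.add_eq_left_of_lt (hy.trans_lt (hx ▸ hrs))]
  exact hx

theorem sphere_subset_closedBall_zero (r : ℝ) : v.sphere r ⊆ v.closedBall 0 r := fun x hx => by
  rw [mem_closedBall, sub_zero]
  exact hx.le

theorem image_mul_sphere {a : F} (ha : a ≠ 0) (r : ℝ) :
    (a * ·) '' v.sphere r = v.sphere (v a * r) := by
  ext x
  constructor
  · rintro ⟨z, hz, rfl⟩
    rw [mem_sphere, map_mul, hz]
  · intro hx
    refine ⟨a⁻¹ * x, ?_, mul_inv_cancel_left₀ ha x⟩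
    rw [mem_sphere, map_mul, map_inv₀, hx, inv_mul_cancel_left₀ (v.ne_zero ha)]

theorem image_add_closedBall (b y : F) (r : ℝ) :
    (· + b) '' v.closedBall y r = v.closedBall (y + b) r := by
  ext x
  rw [Set.image_add_right, mem_preimage, mem_closedBall, mem_closedBall,
    show x + -b - y = x - (y + b) by ring]

theorem image_mul_closedBall {a : F} (ha : a ≠ 0) (y : F) (r : ℝ) :
    (a * ·) '' v.closedBall y r = v.closedBall (a * y) (v a * r) := by
  ext x
  constructor
  · rintro ⟨z, hz, rfl⟩
    rw [mem_closedBall, ← mul_sub, map_mul]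
    exact mul_le_mul_of_nonneg_left hz (v.nonneg a)
  · intro hx
    refine ⟨a⁻¹ * x, ?_, mul_inv_cancel_left₀ ha x⟩
    rw [mem_closedBall, show a⁻¹ * x - y = a⁻¹ * (x - a * y) by field_simp, map_mul, map_inv₀,
      inv_mul_le_iff₀ (v.pos ha)]
    exact hx

structure IsBallPartition (v : AbsoluteValue F ℝ) (A : Set F) (r : ℝ) (R : Finset F) : Prop where
  pairwiseDisjoint : (R : Set F).PairwiseDisjoint (v.closedBall · r)
  eq_biUnion : A = ⋃ y ∈ R, v.closedBall y r

namespace IsBallPartition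

variable {A : Set F} {r : ℝ} {R : Finset F}

theorem mem (hR : v.IsBallPartition A r R) (hr : 0 ≤ r) {y : F} (hy : y ∈ R) : y ∈ A := by
  rw [hR.eq_biUnion]
  exact mem_biUnion hy (mem_closedBall_self hr)

variable [DecidableEq F]

theorem image {T : F → F} (hR : v.IsBallPartition A r R) (hT : Function.Injective T) {r' : ℝ}
    (hball : ∀ y, T '' v.closedBall y r = v.closedBall (T y) r') :
    v.IsBallPartition (T '' A) r' (R.image T) where
  pairwiseDisjoint := by
    rw [Finset.coe_image, hT.injOn.pairwiseDisjoint_image]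
    intro x hx y hy hxy
    simp only [Function.onFun, Function.comp_apply, ← hball]
    exact (Set.disjoint_image_iff hT).2 (hR.pairwiseDisjoint hx hy hxy)
  eq_biUnion := by
    rw [hR.eq_biUnion, image_iUnion₂, Finset.set_biUnion_finset_image]
    simp only [hball]

theorem image_add (hR : v.IsBallPartition A r R) (b : F) :
    v.IsBallPartition ((· + b) '' A) r (R.image (· + b)) :=
  hR.image (add_left_injective b) (image_add_closedBall b · r)

theorem image_mul (hR : v.IsBallPartition A r R) {a : F} (ha : a ≠ 0) :
    v.IsBallPartition ((a * ·) '' A) (v a * r) (R.image (a * ·)) :=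
  hR.image (mul_right_injective₀ ha) (image_mul_closedBall ha · r)

end IsBallPartition

theorem exists_eq_and_ne_one {q : ℝ} (hq : 1 < q)
    (hv : ∀ x : F, x ≠ 0 → ∃ n : ℤ, v x = q ^ n) {M : Type*} [One M] {ψ : F → M}
    (hψ : ∀ x, v x ≤ 1 → ψ x = 1) (hψ' : ∃ x, v x ≤ q ∧ ψ x ≠ 1) : ∃ z, v z = q ∧ ψ z ≠ 1 := by
  obtain ⟨z, hzq, hz⟩ := hψ'
  have hz1 : 1 < v z := lt_of_not_ge fun h => hz (hψ z h)
  obtain ⟨n, hn⟩ := hv z (v.ne_zero_iff.1 (zero_lt_one.trans hz1).ne')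
  have hn1 : n ≤ 1 := (zpow_le_zpow_iff_right₀ hq).1 (by rwa [zpow_one, ← hn])
  have hn0 : 0 < n := (zpow_lt_zpow_iff_right₀ hq).1 (by rwa [zpow_zero, ← hn])
  exact ⟨z, by rw [hn, show n = 1 by omega, zpow_one], hz⟩

end AbsoluteValue

namespace MeasureTheory

theorem nullMeasurableSet_of_measure_add_le {α : Type*} [MeasurableSpace α] {μ : Measure α}
    {C U : Set α} (hU : MeasurableSet U) (hCU : C ⊆ U) (hfin : μ U ≠ ⊤)
    (hadd : μ C + μ (U \ C) ≤ μ U) : NullMeasurableSet C μ := by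
  set T := toMeasurable μ C
  have hT : MeasurableSet T := measurableSet_toMeasurable μ C
  have hCT : C ⊆ T := subset_toMeasurable μ C
  have hsplit : μ (U \ C) = μ ((U \ C) ∩ T) + μ (U \ T) := by
    rw [← measure_inter_add_sdiff (U \ C) hT, sdiff_sdiff, union_eq_right.2 hCT]
  have hnull : μ ((U \ C) ∩ T) = 0 := by
    have hle : μ U + μ ((U \ C) ∩ T) ≤ μ U + 0 := calc
      μ U + μ ((U \ C) ∩ T) = μ (U ∩ T) + μ (U \ T) + μ ((U \ C) ∩ T) := by
        rw [measure_inter_add_sdiff U hT]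
      _ ≤ μ C + μ (U \ T) + μ ((U \ C) ∩ T) := by
        gcongr ?_ + _ + _
        exact (measure_mono inter_subset_right).trans (measure_toMeasurable C).le
      _ = μ C + μ (U \ C) := by rw [hsplit]; ring
      _ ≤ μ U + 0 := by rw [add_zero]; exact hadd
    exact le_antisymm ((ENNReal.add_le_add_iff_left hfin).1 hle) zero_le
  refine ⟨T ∩ U, hT.inter hU, ae_eq_set.2 ⟨?_, ?_⟩⟩
  · rw [sdiff_eq_empty.2 (subset_inter hCT hCU), measure_empty]
  · refine measure_mono_null ?_ hnull
    rintro x ⟨⟨hxT, hxU⟩, hxC⟩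
    exact ⟨⟨hxU, hxC⟩, hxT⟩

end MeasureTheory

section

variable {F : Type*} [Field F] [MeasurableSpace F]

structure IsNormalizedHaar (μ : Measure F) (v : AbsoluteValue F ℝ) (q : ℝ) : Prop where
  one_lt : 1 < q
  isNonarchimedean : IsNonarchimedean v
  measurable : Measurable v
  exists_zpow_eq : ∀ x : F, x ≠ 0 → ∃ n : ℤ, v x = q ^ n
  exists_eq : ∃ π : F, v π = q
  measure_preimage_add : ∀ (a : F) (s : Set F), MeasurableSet s → μ ((a + ·) ⁻¹' s) = μ s
  measure_preimage_mul : ∀ a : F, a ≠ 0 → ∀ s : Set F, MeasurableSet s →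
    μ ((a * ·) ⁻¹' s) = ENNReal.ofReal (v a)⁻¹ * μ s
  measure_closedBall_zero_one : μ (v.closedBall 0 1) = 1

namespace IsNormalizedHaar

open AbsoluteValue

variable {μ : Measure F} {v : AbsoluteValue F ℝ} {q : ℝ} (hF : IsNormalizedHaar μ v q)
include hF

theorem q_pos : 0 < q := zero_lt_one.trans hF.one_lt

theorem zpow_le_zpow {j k : ℤ} (h : j ≤ k) : q ^ j ≤ q ^ k :=
  zpow_le_zpow_right₀ hF.one_lt.le h

theorem exists_le_zpow (B : ℝ) (j : ℤ) : ∃ K : ℤ, j ≤ K ∧ B ≤ q ^ K := by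
  obtain ⟨n, hn⟩ := pow_unbounded_of_one_lt B hF.one_lt
  refine ⟨max j n, le_max_left _ _, hn.le.trans ?_⟩
  exact_mod_cast hF.zpow_le_zpow (le_max_right j n)

theorem measurableSet_closedBall_zero (r : ℝ) : MeasurableSet (v.closedBall 0 r) := by
  rw [closedBall_zero_eq]
  exact hF.measurable measurableSet_Iic

theorem measurableSet_sphere (r : ℝ) : MeasurableSet (v.sphere r) :=
  hF.measurable (measurableSet_singleton r)

theorem measure_closedBall (y : F) (j : ℤ) :
    μ (v.closedBall y (q ^ j)) = ENNReal.ofReal (q ^ j) := by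
  obtain ⟨π, hπ⟩ := hF.exists_eq
  have hπ0 : π ≠ 0 := fun h => by simp [h, hF.q_pos.ne] at hπ
  have ha : v (π ^ (-j)) = (q ^ j)⁻¹ := by rw [map_zpow₀, hπ, zpow_neg]
  have hshift : (-y + ·) ⁻¹' v.closedBall 0 (q ^ j) = v.closedBall y (q ^ j) := by
    ext x
    simp only [mem_preimage, mem_closedBall, sub_zero, neg_add_eq_sub]
  have hscale : (π ^ (-j) * ·) ⁻¹' v.closedBall 0 1 = v.closedBall 0 (q ^ j) := by
    ext x
    simp only [mem_preimage, mem_closedBall, sub_zero, map_mul, ha]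
    rw [inv_mul_le_iff₀ (zpow_pos hF.q_pos j), mul_one]
  rw [← hshift, hF.measure_preimage_add _ _ (hF.measurableSet_closedBall_zero _), ← hscale,
    hF.measure_preimage_mul _ (zpow_ne_zero _ hπ0) _ (hF.measurableSet_closedBall_zero 1),
    hF.measure_closedBall_zero_one, mul_one, ha, inv_inv]

theorem closedBall_zero_one_eq : v.closedBall 0 1 = {0} ∪ ⋃ n : ℕ, v.sphere (q ^ (-(n : ℤ))) := by
  ext x
  rcases eq_or_ne x 0 with rfl | hx
  · simp only [mem_closedBall, sub_zero, map_zero, zero_le_one, mem_union, mem_singleton, true_or]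
  obtain ⟨k, hk⟩ := hF.exists_zpow_eq x hx
  simp only [mem_closedBall, sub_zero, mem_union, mem_singleton_iff, hx, false_or, mem_iUnion,
    mem_sphere, hk]
  rw [← zpow_zero q, zpow_le_zpow_iff_right₀ hF.one_lt]
  constructor
  · intro hk0
    exact ⟨(-k).toNat, by rw [Int.toNat_of_nonneg (by omega), neg_neg]⟩
  · rintro ⟨n, hn⟩
    have := zpow_right_injective₀ hF.q_pos hF.one_lt.ne' hn
    omega

theorem sq_eq_zpow_iff {x : F} {m : ℤ} : v x ^ 2 = q ^ m ↔ ∃ n : ℤ, m = 2 * n ∧ v x = q ^ n := by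
  have hinj := zpow_right_injective₀ hF.q_pos hF.one_lt.ne'
  rcases eq_or_ne x 0 with rfl | hx
  · rw [map_zero, zero_pow two_ne_zero]
    constructor
    · intro h
      exact absurd h.symm (zpow_pos hF.q_pos m).ne'
    · rintro ⟨n, -, hn⟩
      exact absurd hn.symm (zpow_pos hF.q_pos n).ne'
  obtain ⟨k, hk⟩ := hF.exists_zpow_eq x hx
  rw [hk, ← zpow_natCast, ← zpow_mul, hinj.eq_iff]
  constructor
  · intro h
    exact ⟨k, by omega, rfl⟩
  · rintro ⟨n, rfl, hn⟩
    rw [hinj.eq_iff] at hn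
    omega

theorem measure_closedBall_ne_top (y : F) (j : ℤ) : μ (v.closedBall y (q ^ j)) ≠ ⊤ := by
  rw [hF.measure_closedBall]
  exact ENNReal.ofReal_ne_top

theorem measure_singleton_zero : μ {0} = 0 := by
  have hq_inv : q⁻¹ < 1 := inv_lt_one_of_one_lt₀ hF.one_lt
  have hle : ∀ n : ℕ, μ {0} ≤ ENNReal.ofReal (q⁻¹ ^ n) := fun n => by
    rw [inv_pow, ← zpow_natCast, ← zpow_neg, ← hF.measure_closedBall 0]
    exact measure_mono (singleton_subset_iff.2 (mem_closedBall_self (zpow_pos hF.q_pos _).le))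
  have hlim : Filter.Tendsto (fun n : ℕ => ENNReal.ofReal (q⁻¹ ^ n)) Filter.atTop (nhds 0) := by
    rw [← ENNReal.ofReal_zero]
    exact ENNReal.tendsto_ofReal
      (tendsto_pow_atTop_nhds_zero_of_lt_one (inv_nonneg.2 hF.q_pos.le) hq_inv)
  exact le_antisymm (ge_of_tendsto' hlim hle) zero_le

/-- A ball centred off `0` is the preimage of a measurable set under a translation that need not
be measurable; its outer measure and that of its complement in a large ball centred at `0` add
up. -/
theorem nullMeasurableSet_closedBall (y : F) (j : ℤ) :
    NullMeasurableSet (v.closedBall y (q ^ j)) μ := by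
  have hv := hF.isNonarchimedean
  obtain ⟨K, hjK, hyK⟩ := hF.exists_le_zpow (v y) j
  have hy : y ∈ v.closedBall 0 (q ^ K) := by rwa [mem_closedBall, sub_zero]
  have hCU := closedBall_subset_closedBall hv hy (hF.zpow_le_zpow hjK)
  refine nullMeasurableSet_of_measure_add_le (hF.measurableSet_closedBall_zero _) hCU
    (hF.measure_closedBall_ne_top 0 K) ?_
  have hcompl : v.closedBall 0 (q ^ K) \ v.closedBall y (q ^ j) ⊆
      (-y + ·) ⁻¹' (v.closedBall 0 (q ^ K) \ v.closedBall 0 (q ^ j)) := by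
    rintro x ⟨hxK, hxj⟩
    simp only [mem_preimage, mem_sdiff, mem_closedBall, sub_zero, neg_add_eq_sub] at hxK hxj ⊢
    exact ⟨(map_sub_le_max hv x y).trans (max_le hxK hyK), hxj⟩
  calc μ (v.closedBall y (q ^ j)) + μ (v.closedBall 0 (q ^ K) \ v.closedBall y (q ^ j))
      ≤ ENNReal.ofReal (q ^ j) + (ENNReal.ofReal (q ^ K) - ENNReal.ofReal (q ^ j)) := by
        rw [hF.measure_closedBall]
        gcongr
        refine (measure_mono hcompl).trans_eq ?_
        rw [hF.measure_preimage_add _ _ ((hF.measurableSet_closedBall_zero _).diff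
            (hF.measurableSet_closedBall_zero _)),
          measure_sdiff (closedBall_subset_closedBall hv
            (mem_closedBall_self (zpow_pos hF.q_pos K).le) (hF.zpow_le_zpow hjK)) (hF.measurableSet_closedBall_zero _).nullMeasurableSet
            (hF.measure_closedBall_ne_top 0 j),
          hF.measure_closedBall, hF.measure_closedBall]
    _ = μ (v.closedBall 0 (q ^ K)) := by
        rw [add_tsub_cancel_of_le (ENNReal.ofReal_le_ofReal (hF.zpow_le_zpow hjK)),
          hF.measure_closedBall]

theorem finite_image_closedBall {A : Set F} {B : ℝ} (hA : A ⊆ v.closedBall 0 B) (j : ℤ) :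
    ((v.closedBall · (q ^ j)) '' A).Finite := by
  have hv := hF.isNonarchimedean
  obtain ⟨K, hjK, hBK⟩ := hF.exists_le_zpow B j
  have hsub : ∀ b ∈ (v.closedBall · (q ^ j)) '' A, b ⊆ v.closedBall 0 (q ^ K) := by
    rintro _ ⟨x, hx, rfl⟩
    exact closedBall_subset_closedBall hv ((hA hx).trans hBK) (hF.zpow_le_zpow hjK)
  have key := Measure.finite_const_le_meas_of_disjoint_iUnion₀ μ
    (ENNReal.ofReal_pos.2 (zpow_pos hF.q_pos j))
    (As := ((↑) : (v.closedBall · (q ^ j)) '' A → Set F))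
    (fun ⟨_, x, _, hx⟩ => hx ▸ hF.nullMeasurableSet_closedBall x j)
    (fun ⟨_, x, _, hx⟩ ⟨_, y, _, hy⟩ hne => by
      subst hx hy
      exact (disjoint_closedBall_of_ne hv fun h => hne (Subtype.ext h)).aedisjoint)
    (ne_top_of_le_ne_top (hF.measure_closedBall_ne_top 0 K)
      (measure_mono (iUnion_subset fun b => hsub b b.2)))
  have huniv : {b : (v.closedBall · (q ^ j)) '' A | ENNReal.ofReal (q ^ j) ≤ μ b} = univ := by
    refine eq_univ_of_forall fun ⟨_, x, _, hx⟩ => ?_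
    subst hx
    exact (hF.measure_closedBall x j).ge
  rw [huniv] at key
  exact Set.finite_coe_iff.1 (Set.finite_univ_iff.1 key)

theorem exists_isBallPartition {A : Set F} {B : ℝ} (hA : A ⊆ v.closedBall 0 B) (j : ℤ)
    (hsat : ∀ x ∈ A, v.closedBall x (q ^ j) ⊆ A) :
    ∃ R : Finset F, v.IsBallPartition A (q ^ j) R := by
  have hv := hF.isNonarchimedean
  set ball : F → Set F := (v.closedBall · (q ^ j))
  obtain ⟨u, hu_img, hu_inj⟩ := Set.exists_image_eq_and_injOn A ball
  have hu_fin : u.Finite :=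
    Set.Finite.of_finite_image (hu_img ▸ hF.finite_image_closedBall hA j) hu_inj
  refine ⟨hu_fin.toFinset, ⟨?_, ?_⟩⟩
  · intro x hx y hy hxy
    simp only [Set.Finite.coe_toFinset] at hx hy
    exact disjoint_closedBall_of_ne hv fun h => hxy (hu_inj hx hy h)
  · ext x
    simp only [Set.Finite.mem_toFinset, mem_iUnion, exists_prop]
    constructor
    · intro hx
      obtain ⟨y, hy, hxy⟩ := (hu_img ▸ mem_image_of_mem ball hx : ball x ∈ ball '' u)
      refine ⟨y, hy, ?_⟩
      change x ∈ ball y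
      rw [hxy]
      exact mem_closedBall_self (zpow_pos hF.q_pos j).le
    · rintro ⟨y, hy, hxy⟩
      obtain ⟨z, hz, hzy⟩ := (hu_img ▸ mem_image_of_mem ball hy : ball y ∈ ball '' A)
      refine hsat z hz ?_
      change x ∈ ball z
      rwa [hzy]

variable {E : Type*} [NormedAddCommGroup E] {A : Set F} {j : ℤ} {R : Finset F}
  {f : F → E}

theorem integral_eq_sum_of_isBallPartition [NormedSpace ℝ E] (hR : v.IsBallPartition A (q ^ j) R)
    (hf : IntegrableOn f A μ) :
    ∫ x in A, f x ∂μ = ∑ y ∈ R, ∫ x in v.closedBall y (q ^ j), f x ∂μ := by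
  have hA : A = ⋃ y : R, v.closedBall y (q ^ j) := by
    rw [hR.eq_biUnion, ← Finset.set_biUnion_coe, biUnion_eq_iUnion]
    rfl
  rw [hA] at hf ⊢
  rw [integral_iUnion_ae (fun y => hF.nullMeasurableSet_closedBall _ j)
    (fun y z hyz => (hR.pairwiseDisjoint y.2 z.2 (Subtype.coe_ne_coe.2 hyz)).aedisjoint) hf,
    tsum_fintype]
  exact Finset.sum_coe_sort R fun y => ∫ x in v.closedBall y (q ^ j), f x ∂μ

theorem integrableOn_closedBall_of_forall_eq {y : F}
    (hf : ∀ x ∈ v.closedBall y (q ^ j), f x = f y) : IntegrableOn f (v.closedBall y (q ^ j)) μ :=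
  (integrableOn_const (C := f y) (hF.measure_closedBall_ne_top y j)).congr_fun_ae <| by
    filter_upwards [ae_restrict_mem₀ (hF.nullMeasurableSet_closedBall y j)] with x hx
    exact (hf x hx).symm

theorem setIntegral_closedBall_of_forall_eq [NormedSpace ℝ E] [CompleteSpace E] {y : F}
    (hf : ∀ x ∈ v.closedBall y (q ^ j), f x = f y) :
    ∫ x in v.closedBall y (q ^ j), f x ∂μ = q ^ j • f y := by
  rw [setIntegral_congr_fun₀ (hF.nullMeasurableSet_closedBall y j) hf, setIntegral_const,
    measureReal_def, hF.measure_closedBall, ENNReal.toReal_ofReal (zpow_pos hF.q_pos j).le]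

theorem integrableOn_of_isBallPartition (hR : v.IsBallPartition A (q ^ j) R)
    (hf : ∀ x ∈ A, ∀ y ∈ v.closedBall x (q ^ j), f y = f x) : IntegrableOn f A μ := by
  rw [hR.eq_biUnion]
  exact integrableOn_finset_iUnion.2 fun y hy =>
    hF.integrableOn_closedBall_of_forall_eq (hf y (hR.mem (zpow_pos hF.q_pos j).le hy))

theorem integral_eq_smul_sum_of_isBallPartition [NormedSpace ℝ E] [CompleteSpace E]
    (hR : v.IsBallPartition A (q ^ j) R) (hf : ∀ x ∈ A, ∀ y ∈ v.closedBall x (q ^ j), f y = f x) :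
    ∫ x in A, f x ∂μ = q ^ j • ∑ y ∈ R, f y := by
  rw [hF.integral_eq_sum_of_isBallPartition hR (hF.integrableOn_of_isBallPartition hR hf),
    Finset.smul_sum]
  exact Finset.sum_congr rfl fun y hy =>
    hF.setIntegral_closedBall_of_forall_eq (hf y (hR.mem (zpow_pos hF.q_pos j).le hy))

theorem integral_comp_mul_left [NormedSpace ℝ E] [CompleteSpace E] {B : ℝ}
    (hA : A ⊆ v.closedBall 0 B) (hsat : ∀ x ∈ A, v.closedBall x (q ^ j) ⊆ A) {a : F} {n : ℤ}
    (ha : v a = q ^ n) {g : F → E}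
    (hg : ∀ x ∈ A, ∀ y ∈ v.closedBall x (q ^ j), g (a * y) = g (a * x)) :
    ∫ x in A, g (a * x) ∂μ = (v a)⁻¹ • ∫ y in (a * ·) '' A, g y ∂μ := by
  classical
  have ha0 : a ≠ 0 := fun h => by simp [h, (zpow_pos hF.q_pos n).ne] at ha
  have hradius : q ^ (n + j) = v a * q ^ j := by rw [zpow_add₀ hF.q_pos.ne', ha]
  obtain ⟨R, hR⟩ := hF.exists_isBallPartition hA j hsat
  have hR' : v.IsBallPartition ((a * ·) '' A) (q ^ (n + j)) (R.image (a * ·)) :=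
    hradius ▸ hR.image_mul ha0
  have hg' : ∀ x ∈ (a * ·) '' A, ∀ y ∈ v.closedBall x (q ^ (n + j)), g y = g x := by
    rintro _ ⟨x, hx, rfl⟩ y hy
    rw [hradius, ← image_mul_closedBall ha0] at hy
    obtain ⟨z, hz, rfl⟩ := hy
    exact hg x hx z hz
  rw [hF.integral_eq_smul_sum_of_isBallPartition hR hg,
    hF.integral_eq_smul_sum_of_isBallPartition hR' hg',
    Finset.sum_image fun x _ y _ h => mul_left_cancel₀ ha0 h, smul_smul, hradius,
    ← mul_assoc, inv_mul_cancel₀ (v.pos ha0).ne', one_mul]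

theorem integral_closedBall_zero_one_eq_tsum [NormedSpace ℝ E] {C : ℝ} (hbdd : ∀ x, ‖f x‖ ≤ C)
    (hf : ∀ n : ℕ, IntegrableOn f (v.sphere (q ^ (-(n : ℤ)))) μ) :
    ∫ x in v.closedBall 0 1, f x ∂μ = ∑' n : ℕ, ∫ x in v.sphere (q ^ (-(n : ℤ))), f x ∂μ := by
  have hmeas : ∀ n : ℕ, MeasurableSet (v.sphere (q ^ (-(n : ℤ)))) :=
    fun n => hF.measurableSet_sphere _
  have hdisj : Pairwise (Function.onFun Disjoint fun n : ℕ => v.sphere (q ^ (-(n : ℤ)))) := by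
    intro a b hab
    refine Set.disjoint_left.2 fun x ha hb => hab ?_
    have := zpow_right_injective₀ hF.q_pos hF.one_lt.ne' (ha.symm.trans hb)
    omega
  have hfin : μ (⋃ n : ℕ, v.sphere (q ^ (-(n : ℤ)))) < ⊤ := by
    refine (measure_mono (hF.closedBall_zero_one_eq ▸ subset_union_right)).trans_lt ?_
    rw [hF.measure_closedBall_zero_one]
    exact ENNReal.one_lt_top
  have hint : IntegrableOn f (⋃ n : ℕ, v.sphere (q ^ (-(n : ℤ)))) μ := by
    refine ⟨?_, HasFiniteIntegral.restrict_of_bounded C hfin (ae_of_all _ hbdd)⟩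
    rw [Measure.restrict_iUnion hdisj hmeas]
    exact aestronglyMeasurable_sum_measure_iff.2 fun n => (hf n).aestronglyMeasurable
  rw [setIntegral_congr_set (hF.closedBall_zero_one_eq ▸
    union_ae_eq_right_of_ae_eq_empty (ae_eq_empty.2 hF.measure_singleton_zero)),
    integral_iUnion hmeas hdisj hint]

/-- The multiples `n • x` fall into finitely many cosets of `𝔬`, so `ψ x` is a root of unity. -/
theorem norm_addChar_eq_one {ψ : AddChar F ℂ} (hψ : ∀ x, v x ≤ 1 → ψ x = 1) (x : F) :
    ‖ψ x‖ = 1 := by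
  have hv := hF.isNonarchimedean
  set A := range fun n : ℕ => n • x
  have hA : A ⊆ v.closedBall 0 (v x) := by
    rintro _ ⟨n, rfl⟩
    rw [mem_closedBall, sub_zero]
    exact hv.nsmul_le
  have := (hF.finite_image_closedBall hA 0).to_subtype
  obtain ⟨n₁, n₂, hne, heq⟩ := Finite.exists_ne_map_eq_of_infinite
    fun n : ℕ => (⟨_, mem_image_of_mem _ (mem_range_self n)⟩ : (v.closedBall · (q ^ (0 : ℤ))) '' A)
  have hmem : n₁ • x ∈ v.closedBall (n₂ • x) (q ^ (0 : ℤ)) := by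
    have hball : v.closedBall (n₁ • x) (q ^ (0 : ℤ)) = v.closedBall (n₂ • x) (q ^ (0 : ℤ)) :=
      Subtype.ext_iff.1 heq
    rw [← hball]
    exact mem_closedBall_self (zpow_pos hF.q_pos 0).le
  rw [mem_closedBall, zpow_zero] at hmem
  have hpow : ψ x ^ n₁ = ψ x ^ n₂ := by
    rw [← AddChar.map_nsmul_eq_pow, ← AddChar.map_nsmul_eq_pow, ← sub_add_cancel (n₁ • x) (n₂ • x),
      AddChar.map_add_eq_mul, hψ _ hmem, one_mul]
  have hψx : ψ x ≠ 0 := left_ne_zero_of_mul_eq_one (M₀ := ℂ) (b := ψ (-x)) <| by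
    rw [← AddChar.map_add_eq_mul, add_neg_cancel, AddChar.map_zero_eq_one]
  by_contra h
  exact hne ((pow_right_inj₀ (norm_pos_iff.2 hψx) h).1 (by rw [← norm_pow, ← norm_pow, hpow]))

/-- Translating a partition of the ball by `y₀` gives another one, and multiplies the Riemann sum
by `χ y₀`. -/
theorem integral_addChar_closedBall_eq_zero {χ : AddChar F ℂ} {j r : ℤ} (hjr : j ≤ r)
    (hχ : ∀ x, v x ≤ q ^ j → χ x = 1) {y₀ : F} (hy₀ : v y₀ ≤ q ^ r) (hχy₀ : χ y₀ ≠ 1) (x₀ : F) :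
    ∫ x in v.closedBall x₀ (q ^ r), χ x ∂μ = 0 := by
  classical
  have hv := hF.isNonarchimedean
  set C := v.closedBall x₀ (q ^ r)
  have hbdd : C ⊆ v.closedBall 0 (max (q ^ r) (v x₀)) :=
    closedBall_subset_closedBall hv (by rw [mem_closedBall, sub_zero]; exact le_max_right _ _)
      (le_max_left _ _)
  obtain ⟨R, hR⟩ := hF.exists_isBallPartition hbdd j
    fun x hx => closedBall_subset_closedBall hv hx (hF.zpow_le_zpow hjr)
  have hC : (· + y₀) '' C = C := by
    rw [image_add_closedBall, closedBall_eq_of_mem hv]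
    rwa [mem_closedBall, add_sub_cancel_left]
  have hR' := hC ▸ hR.image_add y₀
  have hconst : ∀ x ∈ C, ∀ y ∈ v.closedBall x (q ^ j), χ y = χ x := fun x _ y hy => by
    rw [← add_sub_cancel x y, AddChar.map_add_eq_mul, hχ _ hy, mul_one]
  have hshift := hF.integral_eq_smul_sum_of_isBallPartition hR' hconst
  rw [Finset.sum_image fun a _ b _ h => add_right_cancel h] at hshift
  simp only [AddChar.map_add_eq_mul, ← Finset.sum_mul, ← smul_mul_assoc,
    ← hF.integral_eq_smul_sum_of_isBallPartition hR hconst] at hshift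
  have : (∫ x in C, χ x ∂μ) * (1 - χ y₀) = 0 := by rw [mul_sub, ← hshift, mul_one, sub_self]
  exact (mul_eq_zero.1 this).resolve_right (sub_ne_zero.2 hχy₀.symm)

variable {ψ : AddChar F ℂ} (hψ : ∀ x, v x ≤ 1 → ψ x = 1)
include hψ

theorem addChar_inv_sub_mul_eq (ξ : F) {j k : ℤ} (hjk : j < k) (hjk' : 2 * j ≤ 3 * k) {x y : F}
    (hx : x ∈ v.sphere (q ^ k)) (hy : y ∈ v.closedBall x (q ^ j)) :
    ψ (y⁻¹ - ξ * y) = ψ (x⁻¹ - ξ * x) * ψ (-((ξ + (x ^ 2)⁻¹) * (y - x))) := by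
  have hy' : v y = q ^ k :=
    closedBall_subset_sphere hF.isNonarchimedean hx (zpow_lt_zpow_right₀ hF.one_lt hjk) hy
  have hx0 : x ≠ 0 := fun h => by simp [h, mem_sphere, (zpow_pos hF.q_pos k).ne] at hx
  have hy0 : y ≠ 0 := fun h => by simp [h, (zpow_pos hF.q_pos k).ne] at hy'
  -- Taylor expansion of `y⁻¹` at `x`; the remainder lies in `𝔬` because `2 j ≤ 3 k`.
  have hid : y⁻¹ - ξ * y =
      (x⁻¹ - ξ * x) + -((ξ + (x ^ 2)⁻¹) * (y - x)) + (y - x) ^ 2 * ((x ^ 2)⁻¹ * y⁻¹) := by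
    field_simp
    ring
  have hJK : (q ^ j) ^ 2 ≤ (q ^ k) ^ 3 := by
    simp only [← zpow_natCast, ← zpow_mul]
    exact hF.zpow_le_zpow (by omega)
  rw [hid, AddChar.map_add_eq_mul, AddChar.map_add_eq_mul, hψ ((y - x) ^ 2 * ((x ^ 2)⁻¹ * y⁻¹)),
    mul_one]
  rw [map_mul, map_mul, map_pow, map_inv₀, map_inv₀, map_pow, mem_sphere.1 hx, hy']
  calc v (y - x) ^ 2 * (((q ^ k) ^ 2)⁻¹ * (q ^ k)⁻¹)
      ≤ (q ^ j) ^ 2 * (((q ^ k) ^ 2)⁻¹ * (q ^ k)⁻¹) := by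
        have := zpow_pos hF.q_pos k
        gcongr
        exact hy
    _ = (q ^ j) ^ 2 / (q ^ k) ^ 3 := by ring
    _ ≤ 1 := div_le_one_of_le₀ hJK (pow_nonneg (zpow_pos hF.q_pos k).le 3)

theorem addChar_inv_sub_mul_eq_of_mem_sphere {ξ : F} {m k : ℤ} (hξ : v ξ = q ^ m) (hm : 0 < m)
    {x y : F} (hx : x ∈ v.sphere (q ^ k))
    (hy : y ∈ v.closedBall x (q ^ min (-m) (2 * k))) : ψ (y⁻¹ - ξ * y) = ψ (x⁻¹ - ξ * x) := by
  rw [hF.addChar_inv_sub_mul_eq hψ ξ (by omega) (by omega) hx hy,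
    hψ (-((ξ + (x ^ 2)⁻¹) * (y - x))), mul_one]
  have hc : v (ξ + (x ^ 2)⁻¹) ≤ q ^ (-min (-m) (2 * k)) := by
    refine (hF.isNonarchimedean _ _).trans (max_le ?_ ?_)
    · exact hξ ▸ hF.zpow_le_zpow (by omega)
    · rw [map_inv₀, map_pow, mem_sphere.1 hx, ← zpow_natCast, ← zpow_mul, ← zpow_neg]
      exact hF.zpow_le_zpow (by omega)
  rw [v.map_neg, map_mul]
  calc v (ξ + (x ^ 2)⁻¹) * v (y - x) ≤ q ^ (-min (-m) (2 * k)) * q ^ min (-m) (2 * k) :=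
        mul_le_mul hc hy (v.nonneg _) (zpow_pos hF.q_pos _).le
    _ = 1 := by rw [← zpow_add₀ hF.q_pos.ne', neg_add_cancel, zpow_zero]

theorem integrableOn_sphere {ξ : F} {m k : ℤ} (hξ : v ξ = q ^ m) (hm : 0 < m) :
    IntegrableOn (fun x => ψ (x⁻¹ - ξ * x)) (v.sphere (q ^ k)) μ := by
  obtain ⟨R, hR⟩ := hF.exists_isBallPartition (sphere_subset_closedBall_zero (q ^ k))
    (min (-m) (2 * k))
    fun x hx => closedBall_subset_sphere hF.isNonarchimedean hx
      (zpow_lt_zpow_right₀ hF.one_lt (by omega))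
  exact hF.integrableOn_of_isBallPartition hR fun x hx y hy =>
    hF.addChar_inv_sub_mul_eq_of_mem_sphere hψ hξ hm hx hy

theorem integral_closedBall_inv_sub_mul_eq_zero {z₀ : F} (hz₀ : v z₀ = q) (hψz₀ : ψ z₀ ≠ 1)
    {ξ : F} {m k : ℤ} (hξ : v ξ = q ^ m) (hm : 1 < m) (hkm : 2 * k ≠ -m) {x₀ : F}
    (hx₀ : x₀ ∈ v.sphere (q ^ k)) :
    ∫ y in v.closedBall x₀ (q ^ (min (-m) (2 * k) + 1)), ψ (y⁻¹ - ξ * y) ∂μ = 0 := by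
  set j := min (-m) (2 * k)
  set c := ξ + (x₀ ^ 2)⁻¹
  have hx₀' : v (x₀ ^ 2)⁻¹ = q ^ (-(2 * k)) := by
    rw [map_inv₀, map_pow, mem_sphere.1 hx₀, ← zpow_natCast, ← zpow_mul, ← zpow_neg, mul_comm]
    rfl
  have hc : v c = q ^ (-j) := by
    have hne : v ξ ≠ v (x₀ ^ 2)⁻¹ := by
      rw [hξ, hx₀']
      exact (zpow_right_injective₀ hF.q_pos hF.one_lt.ne').ne (by omega)
    rw [hF.isNonarchimedean.add_eq_max_of_ne hne, hξ, hx₀',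
      ← (zpow_right_strictMono₀ hF.one_lt).monotone.map_max]
    congr 1
    omega
  have hc0 : c ≠ 0 := fun h => (zpow_pos hF.q_pos (-j)).ne' (by rw [← hc, h, map_zero])
  have hexpand : ∀ y ∈ v.closedBall x₀ (q ^ (j + 1)),
      ψ (y⁻¹ - ξ * y) = ψ (x₀⁻¹ - ξ * x₀) * ψ (c * x₀) * ψ.mulShift (-c) y := by
    intro y hy
    rw [hF.addChar_inv_sub_mul_eq hψ ξ (by omega) (by omega) hx₀ hy, AddChar.mulShift_apply,
      mul_assoc, ← AddChar.map_add_eq_mul ψ (c * x₀)]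
    congr 2
    ring
  have hy₀ : v ((-c)⁻¹ * z₀) = q ^ (j + 1) := by
    rw [map_mul, map_inv₀, v.map_neg, hc, hz₀, zpow_neg, inv_inv, zpow_add_one₀ hF.q_pos.ne']
  rw [setIntegral_congr_fun₀ (hF.nullMeasurableSet_closedBall _ _) hexpand, integral_const_mul,
    hF.integral_addChar_closedBall_eq_zero (le_add_of_nonneg_right zero_le_one) _ hy₀.le _ x₀,
    mul_zero]
  · intro x hx
    rw [AddChar.mulShift_apply]
    refine hψ _ ?_
    rw [map_mul, v.map_neg, hc]
    calc q ^ (-j) * v x ≤ q ^ (-j) * q ^ j := by gcongr; exact (zpow_pos hF.q_pos _).le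
      _ = 1 := by rw [← zpow_add₀ hF.q_pos.ne', neg_add_cancel, zpow_zero]
  · rwa [AddChar.mulShift_apply, mul_inv_cancel_left₀ (neg_ne_zero.2 hc0)]

theorem integral_sphere_eq_zero {z₀ : F} (hz₀ : v z₀ = q) (hψz₀ : ψ z₀ ≠ 1) {ξ : F} {m k : ℤ}
    (hξ : v ξ = q ^ m) (hm : 1 < m) (hkm : 2 * k ≠ -m) :
    ∫ x in v.sphere (q ^ k), ψ (x⁻¹ - ξ * x) ∂μ = 0 := by
  obtain ⟨R, hR⟩ := hF.exists_isBallPartition (sphere_subset_closedBall_zero (q ^ k))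
    (min (-m) (2 * k) + 1) fun x hx => closedBall_subset_sphere hF.isNonarchimedean hx
      (zpow_lt_zpow_right₀ hF.one_lt (by omega))
  rw [hF.integral_eq_sum_of_isBallPartition hR (hF.integrableOn_sphere hψ hξ (by omega))]
  exact Finset.sum_eq_zero fun x₀ hx₀ => hF.integral_closedBall_inv_sub_mul_eq_zero hψ hz₀ hψz₀
    hξ hm hkm (hR.mem (zpow_pos hF.q_pos _).le hx₀)

theorem integral_sphere_neg_eq {ξ : F} {s : ℤ} (hξ : v ξ = q ^ (2 * s)) (hs : 0 < s) :
    ∫ x in v.sphere (q ^ (-s)), ψ (x⁻¹ - ξ * x) ∂μ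
      = (v ξ)⁻¹ • ∫ x in v.sphere (q ^ s), ψ (ξ * x⁻¹ - x) ∂μ := by
  have hξ0 : ξ ≠ 0 := fun h => by simp [h, (zpow_pos hF.q_pos _).ne] at hξ
  have hcomp : ∀ x, ψ (x⁻¹ - ξ * x) = ψ (ξ * (ξ * x)⁻¹ - ξ * x) := fun x => by
    rw [mul_inv, mul_inv_cancel_left₀ hξ0]
  have himage : (ξ * ·) '' v.sphere (q ^ (-s)) = v.sphere (q ^ s) := by
    rw [image_mul_sphere hξ0, hξ, ← zpow_add₀ hF.q_pos.ne']
    congr 2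
    ring
  have hradius : min (-(2 * s)) (2 * -s) = -(2 * s) := by omega
  simp only [hcomp]
  rw [← himage]
  refine hF.integral_comp_mul_left (g := fun y => ψ (ξ * y⁻¹ - y)) (j := -(2 * s))
    (sphere_subset_closedBall_zero (q ^ (-s)))
    (fun x hx => closedBall_subset_sphere hF.isNonarchimedean hx
      (zpow_lt_zpow_right₀ hF.one_lt (by omega))) hξ fun x hx y hy => ?_
  rw [← hcomp, ← hcomp]
  exact hF.addChar_inv_sub_mul_eq_of_mem_sphere hψ hξ (by omega) hx (by rwa [hradius])

theorem integral_addChar_inv_sub_mul (hψ' : ∃ x, v x ≤ q ∧ ψ x ≠ 1) {ξ : F} (hξ : q < v ξ) :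
    ∫ x in {x | v x ≤ 1}, ψ (x⁻¹ - ξ * x) ∂μ
      = (v ξ)⁻¹ • ∫ x in {x | v x ^ 2 = v ξ}, ψ (ξ * x⁻¹ - x) ∂μ := by
  obtain ⟨z₀, hz₀, hψz₀⟩ := exists_eq_and_ne_one hF.one_lt hF.exists_zpow_eq hψ hψ'
  obtain ⟨m, hm⟩ := hF.exists_zpow_eq ξ (v.ne_zero_iff.1 (hF.q_pos.trans hξ).ne')
  have hm1 : 1 < m := (zpow_lt_zpow_iff_right₀ hF.one_lt).1 (by rwa [zpow_one, ← hm])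
  have hbad (k : ℤ) (hk : 2 * k ≠ -m) : ∫ x in v.sphere (q ^ k), ψ (x⁻¹ - ξ * x) ∂μ = 0 :=
    hF.integral_sphere_eq_zero hψ hz₀ hψz₀ hm hm1 hk
  rw [← closedBall_zero_eq, hF.integral_closedBall_zero_one_eq_tsum
    (fun x => (hF.norm_addChar_eq_one hψ _).le) fun n => hF.integrableOn_sphere hψ hm (by omega)]
  obtain ⟨s, rfl | rfl⟩ := Int.even_or_odd' m
  · have hset : {x | v x ^ 2 = v ξ} = v.sphere (q ^ s) := by
      ext x
      rw [mem_ofPred_eq, hm, hF.sq_eq_zpow_iff]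
      exact ⟨fun ⟨n, hn, hx⟩ => (by omega : n = s) ▸ hx, fun hx => ⟨s, rfl, hx⟩⟩
    rw [hset, ← hF.integral_sphere_neg_eq hψ hm (by omega),
      tsum_eq_single s.toNat fun n hn => hbad _ (by omega), Int.toNat_of_nonneg (by omega)]
  · have hset : {x | v x ^ 2 = v ξ} = ∅ := by
      ext x
      simp only [mem_ofPred_eq, hm, hF.sq_eq_zpow_iff, mem_empty_iff_false, iff_false, not_exists,
        not_and]
      omega
    rw [hset, Measure.restrict_empty, integral_zero_measure, smul_zero]
    exact (tsum_congr fun n => hbad _ (by omega)).trans tsum_zero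

end IsNormalizedHaar

end

theorem stmt_19_general {F : Type*} [Field F] [MeasurableSpace F]
    (μ : Measure F) (abs : F → ℝ) (q : ℝ) (ψ : F → ℂ)
    (hq : 1 < q)
    (habs_meas : Measurable abs)
    (habs_nonneg : ∀ x, 0 ≤ abs x)
    (habs_eq_zero : ∀ x, abs x = 0 ↔ x = 0)
    (habs_mul : ∀ x y, abs (x * y) = abs x * abs y)
    (habs_add : ∀ x y, abs (x + y) ≤ max (abs x) (abs y))
    (habs_vals : ∀ x : F, x ≠ 0 → ∃ n : ℤ, abs x = q ^ n)
    (hμ_inv : ∀ (a : F) (s : Set F), MeasurableSet s → μ ((fun x => a + x) ⁻¹' s) = μ s)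
    (hμ_scale : ∀ a : F, a ≠ 0 → ∀ s : Set F, MeasurableSet s →
      μ ((fun x => a * x) ⁻¹' s) = ENNReal.ofReal ((abs a)⁻¹) * μ s)
    (hμ_int : μ {x : F | abs x ≤ 1} = 1)
    (hψ_add : ∀ x y, ψ (x + y) = ψ x * ψ y)
    (hψ_triv : ∀ x, abs x ≤ 1 → ψ x = 1)
    (hψ_nontriv : ∃ x, abs x ≤ q ∧ ψ x ≠ 1)
    (ξ : F) (hξ : max 1 (q ^ 2) < abs ξ) :
    ∫ x in {x : F | abs x ≤ 1}, ψ (x⁻¹ - ξ * x) ∂μ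
      = ((abs ξ)⁻¹ : ℝ) • ∫ x in {x : F | (abs x) ^ 2 = abs ξ}, ψ (ξ * x⁻¹ - x) ∂μ := by
  let v : AbsoluteValue F ℝ :=
    { toFun := abs
      map_mul' := habs_mul
      nonneg' := habs_nonneg
      eq_zero' := habs_eq_zero
      add_le' := fun x y =>
        (habs_add x y).trans (max_le_add_of_nonneg (habs_nonneg x) (habs_nonneg y)) }
  let χ : AddChar F ℂ :=
    { toFun := ψ
      map_zero_eq_one' := hψ_triv 0 (by rw [(habs_eq_zero 0).2 rfl]; exact zero_le_one)
      map_add_eq_mul' := hψ_add }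
  have hF : IsNormalizedHaar μ v q :=
    { one_lt := hq
      isNonarchimedean := habs_add
      measurable := habs_meas
      exists_zpow_eq := habs_vals
      exists_eq := (AbsoluteValue.exists_eq_and_ne_one (v := v) hq habs_vals hψ_triv hψ_nontriv).imp
        fun _ => And.left
      measure_preimage_add := hμ_inv
      measure_preimage_mul := hμ_scale
      measure_closedBall_zero_one := by rw [AbsoluteValue.closedBall_zero_eq]; exact hμ_int }
  have hqξ : q < v ξ := calc
    q < q ^ 2 := lt_self_pow₀ hq one_lt_two
    _ < abs ξ := (le_max_right _ _).trans_lt hξ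
  exact hF.integral_addChar_inv_sub_mul (ψ := χ) hψ_triv hψ_nontriv hqξ

/-- Fourier transform of `ψ(1/x)1_𝔬(x)`: for `|ξ| > max(1, q²)`,
`∫_𝔬 ψ(x⁻¹ - ξx) dx = |ξ|⁻¹ ∫_{|x|² = |ξ|} ψ(ξx⁻¹ - x) dx`. -/
theorem stmt_19 {F : Type*} [Field F] [MeasurableSpace F]
    (μ : Measure F) (abs : F → ℝ) (q : ℝ) (ψ : F → ℂ)
    (hq : 1 < q)
    (habs_meas : Measurable abs)
    (habs_nonneg : ∀ x, 0 ≤ abs x)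
    (habs_eq_zero : ∀ x, abs x = 0 ↔ x = 0)
    (habs_mul : ∀ x y, abs (x * y) = abs x * abs y)
    (habs_add : ∀ x y, abs (x + y) ≤ max (abs x) (abs y))
    (habs_vals : ∀ x : F, x ≠ 0 → ∃ n : ℤ, abs x = q ^ n)
    (hμ_inv : ∀ (a : F) (s : Set F), MeasurableSet s → μ ((fun x => a + x) ⁻¹' s) = μ s)
    (hμ_scale : ∀ a : F, a ≠ 0 → ∀ s : Set F, MeasurableSet s →
      μ ((fun x => a * x) ⁻¹' s) = ENNReal.ofReal ((abs a)⁻¹) * μ s)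
    (hμ_fin : ∀ n : ℤ, μ {x : F | abs x ≤ q ^ n} < ⊤)
    (hμ_int : μ {x : F | abs x ≤ 1} = 1)
    (hψ_meas : Measurable ψ)
    (hψ_add : ∀ x y, ψ (x + y) = ψ x * ψ y)
    (hψ_triv : ∀ x, abs x ≤ 1 → ψ x = 1)
    (hψ_nontriv : ∃ x, abs x ≤ q ∧ ψ x ≠ 1)
    (ξ : F) (hξ : max 1 (q ^ 2) < abs ξ) :
    ∫ x in {x : F | abs x ≤ 1}, ψ (x⁻¹ - ξ * x) ∂μ
      = ((abs ξ)⁻¹ : ℝ) • ∫ x in {x : F | (abs x) ^ 2 = abs ξ}, ψ (ξ * x⁻¹ - x) ∂μ :=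
  stmt_19_general μ abs q ψ hq habs_meas habs_nonneg habs_eq_zero habs_mul habs_add habs_vals hμ_inv
    hμ_scale hμ_int hψ_add hψ_triv hψ_nontriv ξ hξ
end
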